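/- arXiv:1409.8332 — 7 statements merged into one kernel-verified Lean document; each statement's English description precedes it below -/
import Mathlib

section
/- If x : ℝ≥0 → ℝⁿ is a Carathéodory solution of the consensus dynamics ẋᵢ = Σⱼ aᵢⱼ(t)(xⱼ - xᵢ) with nonnegative weights aᵢⱼ, then the maximum maxᵢ xᵢ(t) is nonincreasing in t and the minimum minᵢ xᵢ(t) is nondecreasing in t; consequently all trajectories remain in the convex hull of the initial values. -/
open intervalIntegral Finset

/-- `-inf' = sup'` of negations. -/
lemma neg_inf'_eq_sup'_neg {n : ℕ} (ne : (Finset.univ : Finset (Fin n)).Nonempty)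
    (f : Fin n → ℝ) :
    -(Finset.univ.inf' ne f) = Finset.univ.sup' ne (fun j => -(f j)) := by
  apply le_antisymm
  · obtain ⟨b, hb, hbeq⟩ := Finset.exists_mem_eq_inf' ne f
    rw [hbeq]
    exact Finset.le_sup' (fun j => -(f j)) hb
  · apply Finset.sup'_le
    intro b hb
    exact neg_le_neg (Finset.inf'_le f hb)

set_option maxHeartbeats 1000000 in
/-- Key maximum principle. -/
lemma consensus_key
    (n : ℕ)
    (x : Fin n → ℝ → ℝ) (a : Fin n → Fin n → ℝ → ℝ)
    (ha_nonneg : ∀ i j t, 0 ≤ a i j t)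
    (ha_int : ∀ i j t, 0 ≤ t → IntervalIntegrable (a i j) MeasureTheory.volume 0 t)
    (hx_cont : ∀ i, Continuous (x i))
    (hsol : ∀ i t, 0 ≤ t →
      x i t = x i 0 + ∫ s in (0:ℝ)..t, ∑ j, a i j s * (x j s - x i s))
    (ne : (Finset.univ : Finset (Fin n)).Nonempty)
    {t0 t1 : ℝ} (h0 : 0 ≤ t0) (h01 : t0 ≤ t1) (i : Fin n) :
    x i t1 ≤ Finset.univ.sup' ne (fun j => x j t0) := by
  by_contra hcon
  push_neg at hcon
  set M : ℝ := Finset.univ.sup' ne (fun j => x j t0) with hM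
  -- a sub-interval inclusion
  have hsubint : ∀ u v : ℝ, 0 ≤ u → u ≤ v → Set.uIcc u v ⊆ Set.uIcc (0:ℝ) v := by
    intro u v hu huv
    apply Set.uIcc_subset_uIcc
    · rw [Set.mem_uIcc]; left; exact ⟨hu, huv⟩
    · exact Set.right_mem_uIcc
  -- integrability of the vector field
  have hF_int : ∀ (k : Fin n) (u v : ℝ), 0 ≤ u → u ≤ v →
      IntervalIntegrable (fun s => ∑ j, a k j s * (x j s - x k s))
        MeasureTheory.volume u v := by
    intro k u v hu huv
    have key : ∀ j : Fin n, IntervalIntegrable (fun s => a k j s * (x j s - x k s))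
        MeasureTheory.volume u v := by
      intro j
      have h1 : IntervalIntegrable (a k j) MeasureTheory.volume u v :=
        (ha_int k j v (hu.trans huv)).mono_set (hsubint u v hu huv)
      exact h1.mul_continuousOn ((hx_cont j).sub (hx_cont k)).continuousOn
    have h := IntervalIntegrable.sum (f := fun j s => a k j s * (x j s - x k s))
      Finset.univ (fun j _ => key j)
    have heq : (∑ j : Fin n, fun s => a k j s * (x j s - x k s))
        = fun s => ∑ j : Fin n, a k j s * (x j s - x k s) := by
      funext s; simp [Finset.sum_apply]
    rwa [heq] at h
  -- two-time integral relation
  have hstep : ∀ (k : Fin n) (u v : ℝ), 0 ≤ u → u ≤ v →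
      x k v - x k u = ∫ s in u..v, ∑ j, a k j s * (x j s - x k s) := by
    intro k u v hu huv
    have h2 := integral_interval_sub_left (hF_int k 0 v le_rfl (hu.trans huv))
      (hF_int k 0 u le_rfl hu)
    rw [hsol k v (hu.trans huv), hsol k u hu]
    rw [← h2]; ring
  -- continuity of the max
  have hg : Continuous (fun t => Finset.univ.sup' ne (fun j => x j t)) :=
    Continuous.finset_sup'_apply ne (fun j _ => hx_cont j)
  set g := fun t => Finset.univ.sup' ne (fun j => x j t) with hgdef
  -- maximum over [t0, t1]
  obtain ⟨τm, hτm_mem, hτm⟩ :=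
    isCompact_Icc.exists_isMaxOn (Set.nonempty_Icc.mpr h01) hg.continuousOn
  rw [isMaxOn_iff] at hτm
  set S := g τm with hSdef
  have hxleS : ∀ j s, s ∈ Set.Icc t0 t1 → x j s ≤ S := by
    intro j s hs
    exact le_trans (Finset.le_sup' (fun j => x j s) (Finset.mem_univ j)) (hτm s hs)
  have hMS : M < S := lt_of_lt_of_le hcon (hxleS i t1 ⟨h01, le_refl t1⟩)
  -- first time the max is attained
  set K := Set.Icc t0 t1 ∩ g ⁻¹' {S} with hKdef
  have hK_closed : IsClosed K := isClosed_Icc.inter (isClosed_singleton.preimage hg)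
  have hK_ne : K.Nonempty := ⟨τm, hτm_mem, rfl⟩
  have hK_bdd : BddBelow K := ⟨t0, fun t ht => ht.1.1⟩
  set τ := sInf K with hτdef
  have hτK : τ ∈ K := hK_closed.csInf_mem hK_ne hK_bdd
  have hτ_mem : τ ∈ Set.Icc t0 t1 := hτK.1
  have hgτ : g τ = S := hτK.2
  have ht0τ : t0 < τ := by
    rcases lt_or_eq_of_le hτ_mem.1 with h | h
    · exact h
    · exfalso
      have : g t0 = S := by rw [h]; exact hgτ
      have hgt0 : g t0 = M := rfl
      rw [hgt0] at this
      exact absurd this (ne_of_lt hMS)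
  -- agent attaining the max at time τ
  obtain ⟨i0, _, hi0⟩ := Finset.exists_mem_eq_sup' ne (fun j => x j τ)
  have hxi0τ : x i0 τ = S := by rw [← hi0]; exact hgτ
  -- the gap function
  set y := fun s => S - x i0 s with hydef
  have hy_cont : Continuous y := continuous_const.sub (hx_cont i0)
  have hy_pos : ∀ s, t0 ≤ s → s < τ → 0 < y s := by
    intro s hs hsτ
    have hs1 : s ∈ Set.Icc t0 t1 := ⟨hs, hsτ.le.trans hτ_mem.2⟩
    by_contra hy
    push_neg at hy
    have h1 : S ≤ x i0 s := by simpa [hydef, sub_nonpos] using hy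
    have h2 : g s = S := le_antisymm (hτm s hs1)
      (le_trans h1 (Finset.le_sup' (fun j => x j s) (Finset.mem_univ i0)))
    have : τ ≤ s := csInf_le hK_bdd ⟨hs1, h2⟩
    linarith
  -- the total weight
  set c := fun s => ∑ j, a i0 j s with hcdef
  have hc_int : ∀ u v : ℝ, 0 ≤ u → u ≤ v →
      IntervalIntegrable c MeasureTheory.volume u v := by
    intro u v hu huv
    have h := IntervalIntegrable.sum (f := fun (j : Fin n) s => a i0 j s)
      Finset.univ (fun j _ => (ha_int i0 j v (hu.trans huv)).mono_set (hsubint u v hu huv))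
    have heq : (∑ j : Fin n, fun s => a i0 j s) = fun s => ∑ j : Fin n, a i0 j s := by
      funext s; simp [Finset.sum_apply]
    rwa [heq] at h
  have hc_nonneg : ∀ s, 0 ≤ c s := fun s => Finset.sum_nonneg fun j _ => ha_nonneg i0 j s
  -- choose r < τ with small weight mass on [r, τ]
  set P := fun r : ℝ => ∫ s in t0..r, c s with hPdef
  have hP_cont : ContinuousOn P (Set.uIcc t0 τ) :=
    continuousOn_primitive_interval' (hc_int t0 τ h0 ht0τ.le) Set.left_mem_uIcc
  have hP_at : ContinuousWithinAt P (Set.uIcc t0 τ) τ := hP_cont τ Set.right_mem_uIcc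
  rw [Metric.continuousWithinAt_iff] at hP_at
  obtain ⟨δ, hδpos, hδ⟩ := hP_at (1/2) (by norm_num)
  set r := max t0 (τ - δ/2) with hrdef
  have hr0 : t0 ≤ r := le_max_left _ _
  have hrτ : r < τ := max_lt ht0τ (by linarith)
  have hrmem : r ∈ Set.uIcc t0 τ := by
    rw [Set.uIcc_of_le ht0τ.le]; exact ⟨hr0, hrτ.le⟩
  have hrdist : dist r τ < δ := by
    rw [Real.dist_eq, abs_of_nonpos (by linarith)]
    have : τ - δ/2 ≤ r := le_max_right _ _
    linarith
  have hPr : P τ - P r < 1/2 := by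
    have := hδ hrmem hrdist
    rw [Real.dist_eq] at this
    cases abs_lt.mp this with
    | intro h1 h2 => linarith
  have hcrτ : (∫ s in r..τ, c s) ≤ 1/2 := by
    have hsplit : P r + (∫ s in r..τ, c s) = P τ :=
      integral_add_adjacent_intervals (hc_int t0 r h0 hr0)
        (hc_int r τ (h0.trans hr0) hrτ.le)
    linarith
  -- maximum of y on [r, τ]
  obtain ⟨σ, hσ_mem, hσmax⟩ :=
    isCompact_Icc.exists_isMaxOn (Set.nonempty_Icc.mpr hrτ.le) hy_cont.continuousOn
  rw [isMaxOn_iff] at hσmax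
  set Y := y σ with hYdef
  have hYpos : 0 < Y := lt_of_lt_of_le (hy_pos r hr0 hrτ) (hσmax r ⟨le_refl r, hrτ.le⟩)
  have hσr : r ≤ σ := hσ_mem.1
  have hστ : σ ≤ τ := hσ_mem.2
  have h0σ : 0 ≤ σ := (h0.trans hr0).trans hσr
  have hsub : Set.Icc σ τ ⊆ Set.Icc t0 t1 :=
    Set.Icc_subset_Icc (hr0.trans hσr) hτ_mem.2
  -- key inequality
  have h2 : (∫ s in σ..τ, ∑ j, a i0 j s * (x j s - x i0 s)) ≤ ∫ s in σ..τ, c s * Y := by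
    apply integral_mono_on hστ (hF_int i0 σ τ h0σ hστ) ((hc_int σ τ h0σ hστ).mul_const Y)
    intro s hs
    calc ∑ j, a i0 j s * (x j s - x i0 s) ≤ ∑ j, a i0 j s * y s := by
          apply Finset.sum_le_sum
          intro j _
          apply mul_le_mul_of_nonneg_left _ (ha_nonneg i0 j s)
          exact sub_le_sub_right (hxleS j s (hsub hs)) _
      _ = c s * y s := (Finset.sum_mul ..).symm
      _ ≤ c s * Y := mul_le_mul_of_nonneg_left
          (hσmax s ⟨hσr.trans hs.1, hs.2⟩) (hc_nonneg s)
  have h3 : (∫ s in σ..τ, c s) ≤ 1/2 := by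
    have hsplit : (∫ s in r..σ, c s) + (∫ s in σ..τ, c s) = ∫ s in r..τ, c s :=
      integral_add_adjacent_intervals (hc_int r σ (h0.trans hr0) hσr)
        (hc_int σ τ h0σ hστ)
    have hpos : 0 ≤ ∫ s in r..σ, c s :=
      intervalIntegral.integral_nonneg hσr (fun s _ => hc_nonneg s)
    linarith
  have hkey : x i0 τ - x i0 σ ≤ Y / 2 := by
    have h1 := hstep i0 σ τ h0σ hστ
    have h4 : (∫ s in σ..τ, c s * Y) = (∫ s in σ..τ, c s) * Y :=
      intervalIntegral.integral_mul_const Y c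
    have h5 : (∫ s in σ..τ, c s) * Y ≤ (1/2) * Y :=
      mul_le_mul_of_nonneg_right h3 hYpos.le
    rw [h1]
    calc (∫ s in σ..τ, ∑ j, a i0 j s * (x j s - x i0 s)) ≤ ∫ s in σ..τ, c s * Y := h2
      _ = (∫ s in σ..τ, c s) * Y := h4
      _ ≤ (1/2) * Y := h5
      _ = Y / 2 := by ring
  -- contradiction
  have hYeq : x i0 τ - x i0 σ = Y := by
    have : Y = S - x i0 σ := rfl
    rw [this, hxi0τ]
  rw [hYeq] at hkey
  linarith

/-- For a Carathéodory solution of the consensus dynamics with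
nonnegative weights, the maximum of the states is nonincreasing, the minimum is
nondecreasing, and hence trajectories remain in the convex hull (the interval
spanned) of the initial values. -/
theorem consensus_max_antitone_min_monotone
    (n : ℕ) (hn : 0 < n)
    (x : Fin n → ℝ → ℝ) (a : Fin n → Fin n → ℝ → ℝ)
    (ha_nonneg : ∀ i j t, 0 ≤ a i j t)
    (ha_meas : ∀ i j, Measurable (a i j))
    (ha_int : ∀ i j t, 0 ≤ t → IntervalIntegrable (a i j) MeasureTheory.volume 0 t)
    (hx_cont : ∀ i, Continuous (x i))
    (hsol : ∀ i t, 0 ≤ t →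
      x i t = x i 0 + ∫ s in (0:ℝ)..t, ∑ j, a i j s * (x j s - x i s)) :
    AntitoneOn (fun t => Finset.univ.sup' (Finset.univ_nonempty_iff.mpr
        ⟨⟨0, hn⟩⟩) (fun i => x i t)) (Set.Ici (0:ℝ)) ∧
    MonotoneOn (fun t => Finset.univ.inf' (Finset.univ_nonempty_iff.mpr
        ⟨⟨0, hn⟩⟩) (fun i => x i t)) (Set.Ici (0:ℝ)) ∧
    (∀ i t, 0 ≤ t →
      x i t ∈ Set.Icc
        (Finset.univ.inf' (Finset.univ_nonempty_iff.mpr ⟨⟨0, hn⟩⟩) (fun j => x j 0))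
        (Finset.univ.sup' (Finset.univ_nonempty_iff.mpr ⟨⟨0, hn⟩⟩) (fun j => x j 0))) := by
  have ne : (Finset.univ : Finset (Fin n)).Nonempty :=
    Finset.univ_nonempty_iff.mpr ⟨⟨0, hn⟩⟩
  -- the negated system
  have hsol' : ∀ i t, 0 ≤ t →
      -(x i t) = -(x i 0) + ∫ s in (0:ℝ)..t,
        ∑ j, a i j s * ((-(x j s)) - (-(x i s))) := by
    intro i t ht
    have heq : (fun s => ∑ j, a i j s * ((-(x j s)) - (-(x i s))))
        = fun s => -(∑ j, a i j s * (x j s - x i s)) := by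
      funext s
      rw [← Finset.sum_neg_distrib]
      apply Finset.sum_congr rfl
      intro j _
      ring
    rw [heq, intervalIntegral.integral_neg]
    have := hsol i t ht
    linarith
  have hkey : ∀ (t0 t1 : ℝ), 0 ≤ t0 → t0 ≤ t1 → ∀ i,
      x i t1 ≤ Finset.univ.sup' ne (fun j => x j t0) :=
    fun t0 t1 h0 h01 i =>
      consensus_key n x a ha_nonneg ha_int hx_cont hsol ne h0 h01 i
  have hkey' : ∀ (t0 t1 : ℝ), 0 ≤ t0 → t0 ≤ t1 → ∀ i,
      Finset.univ.inf' ne (fun j => x j t0) ≤ x i t1 := by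
    intro t0 t1 h0 h01 i
    have h := consensus_key n (fun i t => -(x i t)) a ha_nonneg ha_int
      (fun i => (hx_cont i).neg) hsol' ne h0 h01 i
    have h2 : (Finset.univ.sup' ne fun j => -(x j t0))
        = -(Finset.univ.inf' ne fun j => x j t0) :=
      (neg_inf'_eq_sup'_neg ne _).symm
    rw [h2] at h
    linarith
  refine ⟨?_, ?_, ?_⟩
  · intro t0 ht0 t1 ht1 h01
    exact Finset.sup'_le _ _ fun i _ => hkey t0 t1 ht0 h01 i
  · intro t0 ht0 t1 ht1 h01
    exact Finset.le_inf' _ _ fun i _ => hkey' t0 t1 ht0 h01 i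
  · intro i t ht
    exact ⟨hkey' 0 t le_rfl ht i, hkey 0 t le_rfl ht i⟩
end

section
/- Let x : [t_p, t_{p+1}] → ℝⁿ solve the consensus dynamics with nonnegative weights, with initial condition xᵢ(t_p) = 0 for i ∈ S and xⱼ(t_p) = 1 for j ∉ S, where S is a nonempty proper subset of agents. If 0 ≤ xₖ(t) ≤ 1 for all k and t (which holds automatically), then max_{i∈S} xᵢ(t_{p+1}) ≤ 1 − exp(−∫_{t_p}^{t_{p+1}} Σ_{i∈S, j∉S} aᵢⱼ(t) dt) ≤ ∫_{t_p}^{t_{p+1}} Σ_{i∈S, j∉S} aᵢⱼ(t) dt. -/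
/-!
Let `m t = 1 - max_{i ∈ S} x i t`. At an index `i ∈ S` realising the maximum, the neighbours
inside `S` can only pull `x i` down, while a neighbour `j ∉ S` pulls it up at rate at most
`a i j (1 - x i)`. Hence `m` satisfies `m' ≥ -(∑_{i ∈ S, j ∉ S} a i j) m` in integrated form,
and Grönwall gives `m tp1 ≥ m tp * exp (-∫ ∑_{i ∈ S, j ∉ S} a i j) = exp (-∫ …)`. Since the
weights are merely integrable, the differential inequality is only available on short intervals,
up to an error controlled by the continuity of `x`; these intervals are chained by real induction.
-/

open intervalIntegral Set

theorem IntervalIntegrable.mono_Icc {f : ℝ → ℝ} {a b c d : ℝ}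
    (hf : IntervalIntegrable f MeasureTheory.volume a b) (hab : a ≤ b) (hc : c ∈ Icc a b)
    (hd : d ∈ Icc a b) : IntervalIntegrable f MeasureTheory.volume c d :=
  hf.mono_set (uIcc_subset_uIcc (by rwa [uIcc_of_le hab]) (by rwa [uIcc_of_le hab]))

theorem IntervalIntegrable.finsetSum_apply {ι : Type*} {f : ι → ℝ → ℝ} {a b : ℝ} (s : Finset ι)
    (h : ∀ i ∈ s, IntervalIntegrable (f i) MeasureTheory.volume a b) :
    IntervalIntegrable (fun t => ∑ i ∈ s, f i t) MeasureTheory.volume a b := by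
  simpa only [Finset.sum_fn] using IntervalIntegrable.sum s h

theorem sub_eq_integral_of_eq_add_integral {y f : ℝ → ℝ} {a b t₁ t₂ : ℝ} (hab : a ≤ b)
    (hf : IntervalIntegrable f MeasureTheory.volume a b)
    (hy : ∀ t ∈ Icc a b, y t = y a + ∫ s in a..t, f s) (h₁ : t₁ ∈ Icc a b) (h₂ : t₂ ∈ Icc a b) :
    y t₂ - y t₁ = ∫ s in t₁..t₂, f s := by
  rw [hy t₂ h₂, hy t₁ h₁, add_sub_add_left_eq_sub, integral_interval_sub_left
    (hf.mono_Icc hab ⟨le_rfl, hab⟩ h₂) (hf.mono_Icc hab ⟨le_rfl, hab⟩ h₁)]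

theorem mul_exp_neg_sub_le_of_sub_le_mul_one_add {u v α c : ℝ} (hu : 0 ≤ u) (hα : 0 ≤ α)
    (hc : 0 ≤ c) (h : u - c ≤ v * (1 + α)) : u * Real.exp (-α) - c ≤ v := by
  have hexp : Real.exp (-α) * (1 + α) ≤ 1 := by
    rw [Real.exp_neg, inv_mul_le_iff₀ (Real.exp_pos α)]
    linarith [Real.add_one_le_exp α]
  refine le_of_mul_le_mul_right ?_ (by linarith : (0 : ℝ) < 1 + α)
  linarith [mul_le_mul_of_nonneg_left hexp hu, mul_nonneg hc hα]

theorem mul_exp_neg_integral_le_of_forall_exists_step {m f g : ℝ → ℝ} {a b : ℝ} (hab : a ≤ b)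
    (hm : ContinuousOn m (Icc a b)) (hm0 : ∀ t ∈ Icc a b, 0 ≤ m t)
    (hf : IntervalIntegrable f MeasureTheory.volume a b)
    (hg : IntervalIntegrable g MeasureTheory.volume a b) (hf0 : ∀ t, 0 ≤ f t) (hg0 : ∀ t, 0 ≤ g t)
    (hstep : ∀ ε > 0, ∀ t ∈ Ico a b, ∃ t' ∈ Ioc t b,
      m t - ε * ∫ s in t..t', g s ≤ m t' * (1 + ∫ s in t..t', f s)) :
    m a * Real.exp (-∫ s in a..b, f s) ≤ m b := by
  have hsplit : ∀ {h : ℝ → ℝ}, IntervalIntegrable h MeasureTheory.volume a b → ∀ {t t'},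
      t ∈ Icc a b → t' ∈ Icc a b → (∫ s in a..t', h s) = (∫ s in a..t, h s) + ∫ s in t..t', h s :=
    fun hh _ _ ht ht' => (integral_add_adjacent_intervals (hh.mono_Icc hab ⟨le_rfl, hab⟩ ht)
      (hh.mono_Icc hab ht ht')).symm
  suffices h : ∀ ε > 0, m a * Real.exp (-∫ s in a..b, f s) - ε * ∫ s in a..b, g s ≤ m b by
    refine le_of_forall_sub_le fun ε hε => ?_
    have hG : 0 ≤ ∫ s in a..b, g s := integral_nonneg hab fun s _ => hg0 s
    have := h (ε / ((∫ s in a..b, g s) + 1)) (by positivity)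
    have : ε / ((∫ s in a..b, g s) + 1) * (∫ s in a..b, g s) ≤ ε := by
      rw [div_mul_eq_mul_div, div_le_iff₀ (by positivity)]; nlinarith
    linarith
  intro ε hε
  have hclosed : IsClosed ({t | m a * Real.exp (-∫ s in a..t, f s) - ε * ∫ s in a..t, g s ≤ m t}
      ∩ Icc a b) := by
    have hprim : ∀ {h : ℝ → ℝ}, IntervalIntegrable h MeasureTheory.volume a b →
        ContinuousOn (fun t => ∫ s in a..t, h s) (Icc a b) := fun hh => by
      simpa [uIcc_of_le hab] using continuousOn_primitive_interval' hh left_mem_uIcc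
    rw [inter_comm]
    exact isClosed_Icc.isClosed_le ((continuousOn_const.mul (hprim hf).neg.rexp).sub
      (continuousOn_const.mul (hprim hg))) hm
  refine hclosed.mem_of_ge_of_forall_exists_gt (by simp) hab ?_
  rintro t ⟨ht, htab⟩
  obtain ⟨t', ht'b, hmt'⟩ := hstep ε hε t htab
  have htI : t ∈ Icc a b := Ico_subset_Icc_self htab
  have ht'I : t' ∈ Icc a b := ⟨htI.1.trans ht'b.1.le, ht'b.2⟩
  refine ⟨t', ?_, ht'b⟩
  have hα : 0 ≤ ∫ s in t..t', f s := integral_nonneg ht'b.1.le fun s _ => hf0 s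
  have hβ : 0 ≤ ∫ s in t..t', g s := integral_nonneg ht'b.1.le fun s _ => hg0 s
  have hG : 0 ≤ ∫ s in a..t, g s := integral_nonneg htI.1 fun s _ => hg0 s
  have hE : Real.exp (-∫ s in t..t', f s) ≤ 1 := Real.exp_le_one_iff.2 (by linarith)
  have hone := mul_exp_neg_sub_le_of_sub_le_mul_one_add (hm0 t htI) hα (by positivity) hmt'
  simp only [mem_ofPred_eq, hsplit hf htI ht'I, hsplit hg htI ht'I, neg_add, Real.exp_add]
  linarith [mul_le_mul_of_nonneg_right ht (Real.exp_pos (-∫ s in t..t', f s)).le,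
    mul_le_mul_of_nonneg_left hE (mul_nonneg hε.le hG)]

theorem exists_Ioc_forall_abs_sub_le {ι : Type*} [Finite ι] {x : ι → ℝ → ℝ} {t b ε : ℝ}
    (hx : ∀ k, ContinuousAt (x k) t) (htb : t < b) (hε : 0 < ε) :
    ∃ t' ∈ Ioc t b, ∀ k, ∀ s ∈ Icc t t', |x k s - x k t'| ≤ ε := by
  have hnear : ∀ᶠ s in nhds t, ∀ k, |x k s - x k t| < ε / 2 :=
    Filter.eventually_all.2 fun k => (hx k).eventually (Metric.ball_mem_nhds _ (half_pos hε))
  obtain ⟨δ, hδ, hball⟩ := Metric.eventually_nhds_iff.1 hnear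
  set t' := min (t + δ / 2) b
  have ht' : t' ∈ Ioc t b := ⟨lt_min (by linarith) htb, min_le_right _ _⟩
  have hclose : ∀ s ∈ Icc t t', ∀ k, |x k s - x k t| < ε / 2 := fun s hs => hball <| by
    rw [Real.dist_eq, abs_of_nonneg (by linarith [hs.1])]
    linarith [hs.2, min_le_left (t + δ / 2) b]
  refine ⟨t', ht', fun k s hs => ?_⟩
  have h₁ := abs_lt.1 (hclose s hs k)
  have h₂ := abs_lt.1 (hclose t' ⟨ht'.1.le, le_rfl⟩ k)
  exact abs_le.2 ⟨by linarith, by linarith⟩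

theorem sum_mul_sub_le_of_abs_sub_le {ι : Type*} [Fintype ι] [DecidableEq ι] {S : Finset ι}
    {w y z : ι → ℝ} {i : ι} {ε : ℝ} (hw : ∀ j, 0 ≤ w j) (hyz : ∀ k, |y k - z k| ≤ ε)
    (hy : ∀ j ∉ S, y j ≤ 1) (hz : ∀ j ∈ S, z j ≤ z i) :
    ∑ j, w j * (y j - y i) ≤ 2 * ε * ∑ j, w j + (1 - z i) * ∑ j ∈ Sᶜ, w j := by
  have hi := abs_le.1 (hyz i)
  calc ∑ j, w j * (y j - y i)
      ≤ ∑ j, (2 * ε * w j + if j ∈ Sᶜ then (1 - z i) * w j else 0) := by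
        refine Finset.sum_le_sum fun j _ => ?_
        have hj := abs_le.1 (hyz j)
        split_ifs with hjS
        · nlinarith [hw j, hy j (Finset.mem_compl.1 hjS)]
        · nlinarith [hw j, hz j (by simpa using hjS)]
    _ = 2 * ε * ∑ j, w j + (1 - z i) * ∑ j ∈ Sᶜ, w j := by
        rw [Finset.sum_add_distrib, Finset.sum_ite_mem, Finset.univ_inter, Finset.mul_sum,
          Finset.mul_sum]

section Consensus

variable {ι : Type*} [Fintype ι] {x : ι → ℝ → ℝ} {a : ι → ι → ℝ → ℝ}
  {S : Finset ι}

theorem intervalIntegrable_consensus_field {t₁ t₂ : ℝ}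
    (hai : ∀ i j, IntervalIntegrable (a i j) MeasureTheory.volume t₁ t₂)
    (hx : ∀ i, Continuous (x i)) (i : ι) :
    IntervalIntegrable (fun s => ∑ j, a i j s * (x j s - x i s)) MeasureTheory.volume t₁ t₂ :=
  .finsetSum_apply _ fun j _ => (hai i j).mul_continuousOn ((hx j).sub (hx i)).continuousOn

theorem one_sub_sup'_sub_le_mul_of_abs_sub_le [DecidableEq ι] (hS : S.Nonempty) {t₁ t₂ ε : ℝ}
    (h₁₂ : t₁ ≤ t₂) (ha : ∀ i j t, 0 ≤ a i j t)
    (hai : ∀ i j, IntervalIntegrable (a i j) MeasureTheory.volume t₁ t₂) (hx : ∀ i, Continuous (x i))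
    (hinc : ∀ i, x i t₂ - x i t₁ = ∫ s in t₁..t₂, ∑ j, a i j s * (x j s - x i s))
    (hx1 : ∀ k, ∀ s ∈ Icc t₁ t₂, x k s ≤ 1) (hosc : ∀ k, ∀ s ∈ Icc t₁ t₂, |x k s - x k t₂| ≤ ε) :
    (1 - S.sup' hS (x · t₁)) - 2 * ε * ∫ s in t₁..t₂, ∑ i ∈ S, ∑ j, a i j s
      ≤ (1 - S.sup' hS (x · t₂)) * (1 + ∫ s in t₁..t₂, ∑ i ∈ S, ∑ j ∈ Sᶜ, a i j s) := by
  obtain ⟨i, hiS, hi⟩ := S.exists_mem_eq_sup' hS (x · t₂)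
  have hε : 0 ≤ ε := (abs_nonneg _).trans (hosc i t₂ ⟨h₁₂, le_rfl⟩)
  have hxi : 0 ≤ 1 - x i t₂ := by linarith [hx1 i t₂ ⟨h₁₂, le_rfl⟩]
  have hrow : ∀ (T : Finset ι) s, ∑ j ∈ T, a i j s ≤ ∑ i ∈ S, ∑ j ∈ T, a i j s := fun T s =>
    Finset.single_le_sum (f := fun i => ∑ j ∈ T, a i j s)
      (fun i _ => Finset.sum_nonneg fun j _ => ha i j s) hiS
  have hpt : ∀ s ∈ Icc t₁ t₂, ∑ j, a i j s * (x j s - x i s)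
      ≤ 2 * ε * (∑ i ∈ S, ∑ j, a i j s) + (1 - x i t₂) * ∑ i ∈ S, ∑ j ∈ Sᶜ, a i j s := by
    intro s hs
    refine (sum_mul_sub_le_of_abs_sub_le (ha i · s) (hosc · s hs) (fun j _ => hx1 j s hs)
      fun j hj => hi ▸ S.le_sup' (x · t₂) hj).trans ?_
    gcongr
    · exact hrow _ s
    · exact hrow _ s
  have hint : ∀ T : Finset ι, IntervalIntegrable (fun s => ∑ i ∈ S, ∑ j ∈ T, a i j s)
      MeasureTheory.volume t₁ t₂ := fun T =>
    .finsetSum_apply S fun i _ => .finsetSum_apply T fun j _ => hai i j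
  have hmono := integral_mono_on h₁₂ (intervalIntegrable_consensus_field hai hx i)
    (((hint _).const_mul _).add ((hint _).const_mul _)) hpt
  rw [integral_add ((hint _).const_mul _) ((hint _).const_mul _), integral_const_mul,
    integral_const_mul, ← hinc] at hmono
  have hsup₁ : x i t₁ ≤ S.sup' hS (x · t₁) := S.le_sup' (x · t₁) hiS
  rw [hi]
  linarith

theorem exists_step_one_sub_sup'_of_consensus [DecidableEq ι] (hS : S.Nonempty) {tp tp1 : ℝ}
    (htp : tp ≤ tp1)
    (ha : ∀ i j t, 0 ≤ a i j t)
    (hai : ∀ i j, IntervalIntegrable (a i j) MeasureTheory.volume tp tp1)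
    (hx : ∀ i, Continuous (x i))
    (hsol : ∀ i t, t ∈ Icc tp tp1 → x i t = x i tp + ∫ s in tp..t, ∑ j, a i j s * (x j s - x i s))
    (hx1 : ∀ k, ∀ t ∈ Icc tp tp1, x k t ≤ 1) :
    ∀ ε > 0, ∀ t ∈ Ico tp tp1, ∃ t' ∈ Ioc t tp1,
      (1 - S.sup' hS (x · t)) - ε * ∫ s in t..t', ∑ i ∈ S, ∑ j, a i j s
        ≤ (1 - S.sup' hS (x · t')) * (1 + ∫ s in t..t', ∑ i ∈ S, ∑ j ∈ Sᶜ, a i j s) := by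
  intro ε hε t ht
  obtain ⟨t', ht', hosc⟩ :=
    exists_Ioc_forall_abs_sub_le (fun k => (hx k).continuousAt) ht.2 (half_pos hε)
  have htI : t ∈ Icc tp tp1 := Ico_subset_Icc_self ht
  have ht'I : t' ∈ Icc tp tp1 := ⟨htI.1.trans ht'.1.le, ht'.2⟩
  have hsub : Icc t t' ⊆ Icc tp tp1 := Icc_subset_Icc htI.1 ht'.2
  refine ⟨t', ht', ?_⟩
  convert one_sub_sup'_sub_le_mul_of_abs_sub_le hS ht'.1.le ha
    (fun i j => (hai i j).mono_Icc htp htI ht'I) hx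
    (fun i => sub_eq_integral_of_eq_add_integral htp
      (intervalIntegrable_consensus_field hai hx i) (hsol i) htI ht'I)
    (fun k s hs => hx1 k s (hsub hs)) hosc using 2
  ring

end Consensus

theorem consensus_max_over_S_upper_bound_general
    (n : ℕ) (tp tp1 : ℝ) (htp : tp ≤ tp1)
    (x : Fin n → ℝ → ℝ) (a : Fin n → Fin n → ℝ → ℝ)
    (S : Finset (Fin n)) (hS : S.Nonempty)
    (ha_nonneg : ∀ i j t, 0 ≤ a i j t)
    (ha_int : ∀ i j, IntervalIntegrable (a i j) MeasureTheory.volume tp tp1)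
    (hx_cont : ∀ i, Continuous (x i))
    (hsol : ∀ i t, t ∈ Set.Icc tp tp1 →
      x i t = x i tp + ∫ s in tp..t, ∑ j, a i j s * (x j s - x i s))
    (hinit_S : ∀ i ∈ S, x i tp = 0)
    (hx_box : ∀ k t, t ∈ Set.Icc tp tp1 → x k t ∈ Set.Icc (0:ℝ) 1) :
    S.sup' hS (fun i => x i tp1)
        ≤ 1 - Real.exp (-(∫ t in tp..tp1, ∑ i ∈ S, ∑ j ∈ Sᶜ, a i j t)) ∧
    1 - Real.exp (-(∫ t in tp..tp1, ∑ i ∈ S, ∑ j ∈ Sᶜ, a i j t))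
        ≤ ∫ t in tp..tp1, ∑ i ∈ S, ∑ j ∈ Sᶜ, a i j t := by
  have hx1 : ∀ k, ∀ t ∈ Icc tp tp1, x k t ≤ 1 := fun k t ht => (hx_box k t ht).2
  have hsup₀ : S.sup' hS (x · tp) = 0 := (S.sup'_congr hS rfl hinit_S).trans (S.sup'_const hS 0)
  have hweight : ∀ T : Finset (Fin n), (∀ t, 0 ≤ ∑ i ∈ S, ∑ j ∈ T, a i j t) ∧
      IntervalIntegrable (fun t => ∑ i ∈ S, ∑ j ∈ T, a i j t) MeasureTheory.volume tp tp1 :=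
    fun T => ⟨fun t => Finset.sum_nonneg fun i _ => Finset.sum_nonneg fun j _ => ha_nonneg i j t,
      .finsetSum_apply S fun i _ => .finsetSum_apply T fun j _ => ha_int i j⟩
  have hbound := mul_exp_neg_integral_le_of_forall_exists_step (m := fun t => 1 - S.sup' hS (x · t))
    htp (continuous_const.sub (.finset_sup'_apply hS fun i _ => hx_cont i)).continuousOn
    (fun t ht => sub_nonneg.2 (S.sup'_le hS _ fun k _ => hx1 k t ht))
    (hweight Sᶜ).2 (hweight Finset.univ).2 (hweight Sᶜ).1 (hweight Finset.univ).1
    (exists_step_one_sub_sup'_of_consensus hS htp ha_nonneg ha_int hx_cont hsol hx1)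
  simp only [hsup₀, sub_zero, one_mul] at hbound
  exact ⟨by linarith,
    by linarith [Real.add_one_le_exp (-∫ t in tp..tp1, ∑ i ∈ S, ∑ j ∈ Sᶜ, a i j t)]⟩

/-- Starting from the indicator-type initial state (0 on `S`, 1 off
`S`), the maximum over `S` at time `t_{p+1}` is at most
`1 - exp(-∫ Σ_{i∈S,j∉S} a_ij) ≤ ∫ Σ_{i∈S,j∉S} a_ij`. -/
theorem consensus_max_over_S_upper_bound
    (n : ℕ) (tp tp1 : ℝ) (htp : tp ≤ tp1)
    (x : Fin n → ℝ → ℝ) (a : Fin n → Fin n → ℝ → ℝ)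
    (S : Finset (Fin n)) (hS : S.Nonempty) (hSproper : S ≠ Finset.univ)
    (ha_nonneg : ∀ i j t, 0 ≤ a i j t)
    (ha_int : ∀ i j, IntervalIntegrable (a i j) MeasureTheory.volume tp tp1)
    (hx_cont : ∀ i, Continuous (x i))
    (hsol : ∀ i t, t ∈ Set.Icc tp tp1 →
      x i t = x i tp + ∫ s in tp..t, ∑ j, a i j s * (x j s - x i s))
    (hinit_S : ∀ i ∈ S, x i tp = 0)
    (hinit_notS : ∀ j ∉ S, x j tp = 1)
    (hx_box : ∀ k t, t ∈ Set.Icc tp tp1 → x k t ∈ Set.Icc (0:ℝ) 1) :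
    S.sup' hS (fun i => x i tp1)
        ≤ 1 - Real.exp (-(∫ t in tp..tp1, ∑ i ∈ S, ∑ j ∈ Sᶜ, a i j t)) ∧
    1 - Real.exp (-(∫ t in tp..tp1, ∑ i ∈ S, ∑ j ∈ Sᶜ, a i j t))
        ≤ ∫ t in tp..tp1, ∑ i ∈ S, ∑ j ∈ Sᶜ, a i j t :=
  consensus_max_over_S_upper_bound_general n tp tp1 htp x a S hS ha_nonneg ha_int hx_cont hsol
    hinit_S hx_box
end

section
/- There exists a choice of nonnegative, piecewise-constant, locally integrable weights aᵢⱼ : ℝ≥0 → ℝ≥0 on three agents satisfying the integral cut-balance reciprocity condition with K = 1 on intervals [4p, 4p+4] (i.e., for every nonempty proper subset S, Σ_{i∈S,j∉S} ∫_{4p}^{4p+4} aᵢⱼ = Σ_{i∈S,j∉S} ∫_{4p}^{4p+4} aⱼᵢ), such that some trajectory of the consensus system does not converge. -/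
/-!
Block `p` switches on the edges `a₂₁, a₁₂, a₂₃, a₃₂` one after the other, each for unit time at
the same rate `ρ_p`, so the integrated weight matrix of every block is symmetric and cut balance
holds edge by edge. With a single active edge the flow is explicit: the pulled agent relaxes
exponentially towards the other one, and after unit time its distance to it has shrunk by the
factor `exp (-ρ_p)`. With `exp (-ρ_p) = 2⁻¹ ^ (p + 3)` agents 1 and 3 move by less than `1/4` in
total, while agent 2 is below `1/4` at every time `4p + 1` and above `3/4` at every time `4p + 3`.
-/

open intervalIntegral

open Set Filter Topology MeasureTheory

section NatFloorPieces

variable {E : Type*} {g : ℕ → ℝ → E}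

theorem continuous_natFloor_pieces [TopologicalSpace E] (hg : ∀ m, Continuous (g m))
    (hjoin : ∀ m : ℕ, g m (m + 1) = g (m + 1) (m + 1)) :
    Continuous fun t => g ⌊t⌋₊ t := by
  have hbot : Tendsto (fun n : ℤ => (n : ℝ) + 1) atBot atBot :=
    tendsto_atBot_add_const_right _ _ (tendsto_intCast_atBot_iff.2 tendsto_id)
  refine (locallyFinite_Icc_of_tendsto tendsto_intCast_atTop_atTop hbot).continuous
    (eq_univ_of_forall fun t => mem_iUnion.2 ⟨⌊t⌋, Int.floor_le t, (Int.lt_floor_add_one t).le⟩)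
    (fun _ => isClosed_Icc) fun n => (hg n.toNat).continuousOn.congr fun t ht => ?_
  rcases ht.2.lt_or_eq with hlt | rfl
  · rw [← Int.floor_toNat, Int.floor_eq_on_Ico n t ⟨ht.1, hlt⟩]
  · rcases le_or_gt 0 n with hn | hn
    · lift n to ℕ using hn
      simpa [Nat.floor_add_one] using (hjoin n).symm
    · have h0 : ((n : ℝ) + 1) ≤ 0 := by exact_mod_cast hn
      simp [Nat.floor_of_nonpos h0, Int.toNat_of_nonpos hn.le]

theorem eqOn_natFloor_pieces_uIoo (m : ℕ) :
    EqOn (fun t => g ⌊t⌋₊ t) (g m) (uIoo (m : ℝ) (m + 1)) := by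
  intro t ht
  rw [uIoo_of_le (by linarith)] at ht
  simp only [Nat.floor_eq_on_Ico m t ⟨ht.1.le, ht.2⟩]

variable [NormedAddCommGroup E]

theorem intervalIntegrable_natFloor_pieces_unit (hg : ∀ m, Continuous (g m)) (m : ℕ) :
    IntervalIntegrable (fun t => g ⌊t⌋₊ t) volume m (m + 1) :=
  ((hg m).intervalIntegrable _ _).congr_uIoo (eqOn_natFloor_pieces_uIoo m).symm

theorem intervalIntegrable_natFloor_pieces (hg : ∀ m, Continuous (g m)) {b : ℝ} (hb : 0 ≤ b) :
    IntervalIntegrable (fun t => g ⌊t⌋₊ t) volume 0 b := by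
  have h := IntervalIntegrable.trans_iterate (a := fun k : ℕ => (k : ℝ)) (n := ⌈b⌉₊)
    fun k _ => by simpa using intervalIntegrable_natFloor_pieces_unit hg k
  simp only [Nat.cast_zero] at h
  refine h.mono_set ?_
  rw [uIcc_of_le hb, uIcc_of_le (Nat.cast_nonneg _)]
  exact Icc_subset_Icc le_rfl (Nat.le_ceil b)

theorem integral_natFloor_pieces_unit [NormedSpace ℝ E] (m : ℕ) :
    ∫ t in (m : ℝ)..m + 1, g ⌊t⌋₊ t = ∫ t in (m : ℝ)..m + 1, g m t :=
  integral_congr_uIoo (eqOn_natFloor_pieces_uIoo m)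

end NatFloorPieces

section Relax

variable {ι : Type*} [DecidableEq ι]

/-- With `c = exp (-ρ s)`, this is the time-`s` flow of the consensus system whose only edge is
`e`, with weight `ρ`. -/
def relax (X : ι → ℝ) (e : ι × ι) (c : ℝ) : ι → ℝ :=
  Function.update X e.1 (X e.2 + c * (X e.1 - X e.2))

@[simp]
theorem relax_one (X : ι → ℝ) (e : ι × ι) : relax X e 1 = X := by
  simp [relax]

theorem hasDerivAt_relax_exp [Fintype ι] (X : ι → ℝ) (e : ι × ι) (ρ s₀ t : ℝ) (k : ι) :
    HasDerivAt (fun s => relax X e (Real.exp (-(ρ * (s - s₀)))) k)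
      (∑ l, (if (k, l) = e then ρ else 0) *
        (relax X e (Real.exp (-(ρ * (t - s₀)))) l - relax X e (Real.exp (-(ρ * (t - s₀)))) k)) t := by
  obtain ⟨i, j⟩ := e
  have hexp : HasDerivAt (fun s => Real.exp (-(ρ * (s - s₀))))
      (-ρ * Real.exp (-(ρ * (t - s₀)))) t := by
    simpa [mul_comm] using (((hasDerivAt_id t).sub_const s₀).const_mul ρ).neg.exp
  by_cases hk : k = i
  · subst hk
    simp only [Prod.mk.injEq, true_and, ite_mul, zero_mul, Finset.sum_ite_eq', Finset.mem_univ,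
      if_true, relax, Function.update_self]
    refine ((hexp.mul_const (X k - X j)).const_add (X j)).congr_deriv ?_
    by_cases hj : j = k
    · subst hj; simp
    · simp only [Function.update_of_ne hj]; ring
  · simpa [relax, Function.update_of_ne hk, hk] using hasDerivAt_const t (X k)

end Relax

namespace EdgeSchedule

noncomputable section

variable {ι : Type*} [DecidableEq ι] (e : ℕ → ι × ι) (r : ℕ → ℝ) (X₀ : ι → ℝ)

def unitWeight (m : ℕ) (i j : ι) : ℝ := if (i, j) = e m then r m else 0

def weight (i j : ι) (t : ℝ) : ℝ := unitWeight e r ⌊t⌋₊ i j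

def node : ℕ → ι → ℝ
  | 0 => X₀
  | m + 1 => relax (node m) (e m) (Real.exp (-r m))

def piece (m : ℕ) (t : ℝ) : ι → ℝ := relax (node e r X₀ m) (e m) (Real.exp (-(r m * (t - m))))

def trajectory (t : ℝ) : ι → ℝ := piece e r X₀ ⌊t⌋₊ t

theorem weight_nonneg (hr : ∀ m, 0 ≤ r m) (i j : ι) (t : ℝ) : 0 ≤ weight e r i j t := by
  unfold weight unitWeight; split_ifs <;> simp [hr]

theorem measurable_weight (i j : ι) : Measurable (weight e r i j) :=
  (measurable_from_nat (f := fun m => unitWeight e r m i j)).comp Nat.measurable_floor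

theorem intervalIntegrable_weight (i j : ι) {b : ℝ} (hb : 0 ≤ b) :
    IntervalIntegrable (weight e r i j) volume 0 b :=
  intervalIntegrable_natFloor_pieces (g := fun m _ => unitWeight e r m i j)
    (fun _ => continuous_const) hb

theorem intervalIntegrable_weight_unit (i j : ι) (m : ℕ) :
    IntervalIntegrable (weight e r i j) volume m (m + 1) :=
  intervalIntegrable_natFloor_pieces_unit (g := fun m _ => unitWeight e r m i j)
    (fun _ => continuous_const) m

theorem integral_weight (i j : ι) (m n : ℕ) :
    ∫ t in (m : ℝ)..m + n, weight e r i j t = ∑ k ∈ Finset.range n, unitWeight e r (m + k) i j := by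
  have hsum := sum_integral_adjacent_intervals (a := fun k : ℕ => ((m + k : ℕ) : ℝ)) (n := n)
    (f := weight e r i j) (μ := volume) fun k _ => by
      simpa [← add_assoc] using intervalIntegrable_weight_unit e r i j (m + k)
  push_cast at hsum
  rw [add_zero] at hsum
  rw [← hsum]
  refine Finset.sum_congr rfl fun k _ => ?_
  have := integral_natFloor_pieces_unit (g := fun m _ => unitWeight e r m i j) (m + k)
  push_cast at this
  simp [weight, ← add_assoc, this]

theorem continuous_piece (m : ℕ) : Continuous (piece e r X₀ m) := by
  unfold piece relax; fun_prop

theorem piece_natCast (m : ℕ) : piece e r X₀ m m = node e r X₀ m := by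
  simp [piece]

theorem piece_natCast_add_one (m : ℕ) : piece e r X₀ m (m + 1) = node e r X₀ (m + 1) := by
  simp [piece, node]

theorem continuous_trajectory : Continuous (trajectory e r X₀) :=
  continuous_natFloor_pieces (continuous_piece e r X₀) fun m => by
    rw [piece_natCast_add_one, ← Nat.cast_succ, piece_natCast]

theorem trajectory_natCast (m : ℕ) : trajectory e r X₀ m = node e r X₀ m := by
  simp [trajectory, piece_natCast]

variable [Fintype ι]

theorem hasDerivWithinAt_trajectory (k : ι) (t : ℝ) :
    HasDerivWithinAt (fun s => trajectory e r X₀ s k)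
      (∑ l, weight e r k l t * (trajectory e r X₀ t l - trajectory e r X₀ t k)) (Ici t) t := by
  have hfloor : ∀ s ∈ Ico t (⌊t⌋₊ + 1), ⌊s⌋₊ = ⌊t⌋₊ := fun s hs =>
    le_antisymm (Nat.lt_succ_iff.1 ((Nat.floor_lt' (Nat.succ_ne_zero _)).2 (by simpa using hs.2)))
      (Nat.floor_mono hs.1)
  have hmem : Ico t (⌊t⌋₊ + 1) ∈ 𝓝[≥] t := Ico_mem_nhdsGE (Nat.lt_floor_add_one t)
  refine (hasDerivAt_relax_exp _ _ _ _ t k).hasDerivWithinAt.congr_of_eventuallyEq ?_ ?_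
  · filter_upwards [hmem] with s hs
    simp [trajectory, piece, hfloor s hs]
  · rfl

theorem trajectory_eq_add_integral (k : ι) {t : ℝ} (ht : 0 ≤ t) :
    trajectory e r X₀ t k = trajectory e r X₀ 0 k +
      ∫ s in (0 : ℝ)..t, ∑ l, weight e r k l s * (trajectory e r X₀ s l - trajectory e r X₀ s k) := by
  have hint := intervalIntegrable_natFloor_pieces (g := fun m s =>
    ∑ l, unitWeight e r m k l * (piece e r X₀ m s l - piece e r X₀ m s k))
    (fun m => by unfold piece relax; fun_prop) ht
  have := integral_eq_sub_of_hasDeriv_right_of_le ht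
    ((continuous_apply k).comp (continuous_trajectory e r X₀)).continuousOn
    (fun s _ => (hasDerivWithinAt_trajectory e r X₀ k s).mono Ioi_subset_Ici_self) hint
  rw [this, Function.comp_apply, Function.comp_apply]
  ring

end

end EdgeSchedule

theorem not_exists_tendsto_of_le_of_ge {X : Type*} {l : Filter X} {f : X → ℝ} {a b : ℕ → X}
    (ha : Tendsto a atTop l) (hb : Tendsto b atTop l) {α β : ℝ} (hαβ : α < β)
    (hfa : ∀ n, f (a n) ≤ α) (hfb : ∀ n, β ≤ f (b n)) : ¬ ∃ L, Tendsto f l (𝓝 L) := by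
  rintro ⟨L, hL⟩
  have hLα := le_of_tendsto (hL.comp ha) (Eventually.of_forall hfa)
  have hLβ := ge_of_tendsto (hL.comp hb) (Eventually.of_forall hfb)
  linarith

namespace CutBalanceCounterexample

open EdgeSchedule

/-- Agents `0, 1, 2` stand for the paper's agents `1, 2, 3`; `(i, j)` active means `a i j > 0`. -/
def schedule (m : ℕ) : Fin 3 × Fin 3 :=
  match m % 4 with
  | 0 => (1, 0)
  | 1 => (0, 1)
  | 2 => (1, 2)
  | _ => (2, 1)

noncomputable def rate (m : ℕ) : ℝ := Real.log (2 ^ (m / 4 + 3))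

noncomputable def initial : Fin 3 → ℝ := ![0, 1 / 2, 1]

theorem rate_nonneg (m : ℕ) : 0 ≤ rate m :=
  Real.log_nonneg (one_le_pow₀ one_le_two)

theorem unitWeight_block_symm (p : ℕ) (i j : Fin 3) :
    ∑ k ∈ Finset.range 4, unitWeight schedule rate (4 * p + k) i j =
      ∑ k ∈ Finset.range 4, unitWeight schedule rate (4 * p + k) j i := by
  have hs : ∀ k, schedule (4 * p + k) = schedule k := fun k => by
    simp only [schedule, Nat.mul_add_mod]
  have hr : ∀ k < 4, rate (4 * p + k) = rate (4 * p) := fun k hk => by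
    simp only [rate]; congr 3; omega
  simp only [Finset.sum_range_succ, Finset.sum_range_zero, unitWeight, hs,
    hr 1 (by norm_num), hr 2 (by norm_num), hr 3 (by norm_num)]
  fin_cases i <;> fin_cases j <;> simp [schedule]

local notation "N" => node schedule rate initial

theorem node_four_mul_add_succ (p : ℕ) {k : ℕ} (hk : k < 4) :
    N (4 * p + k + 1) = relax (N (4 * p + k)) (schedule k) (2⁻¹ ^ (p + 3)) := by
  have hmod : (4 * p + k) % 4 = k % 4 := by omega
  have hdiv : (4 * p + k) / 4 = p := by omega
  simp only [node, rate, hdiv, schedule, hmod, Real.exp_neg,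
    Real.exp_log (by positivity : (0 : ℝ) < 2 ^ (p + 3)), inv_pow]

def Spread (ε : ℝ) (X : Fin 3 → ℝ) : Prop :=
  0 ≤ X 0 ∧ X 0 ≤ X 1 ∧ X 1 ≤ X 2 ∧ X 2 ≤ 1 ∧ X 0 + ε ≤ 1 / 4 ∧ 3 / 4 + ε ≤ X 2

theorem node_block_step (p : ℕ) (hX : Spread (2⁻¹ ^ (p + 2)) (N (4 * p))) :
    N (4 * p + 1) 1 ≤ 1 / 4 ∧ 3 / 4 ≤ N (4 * p + 3) 1 ∧ Spread (2⁻¹ ^ (p + 3)) (N (4 * (p + 1))) := by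
  have hδ0 : (0 : ℝ) ≤ 2⁻¹ ^ (p + 3) := by positivity
  have hδ1 : (2⁻¹ : ℝ) ^ (p + 3) ≤ 1 := pow_le_one₀ (by norm_num) (by norm_num)
  rw [show (2⁻¹ : ℝ) ^ (p + 2) = 2 * 2⁻¹ ^ (p + 3) by ring] at hX
  have h1 := node_four_mul_add_succ p (k := 0) (by norm_num)
  rw [add_zero] at h1
  rw [show 4 * (p + 1) = 4 * p + 3 + 1 by ring, node_four_mul_add_succ p (k := 3) (by norm_num),
    node_four_mul_add_succ p (k := 2) (by norm_num), node_four_mul_add_succ p (k := 1) (by norm_num),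
    h1]
  generalize (2⁻¹ : ℝ) ^ (p + 3) = δ at *
  generalize N (4 * p) = X at *
  obtain ⟨h0, h01, h12, h2, hu, hw⟩ := hX
  simp only [Spread, relax, schedule, Nat.reduceMod, Function.update_apply, Fin.reduceEq, ↓reduceIte]
  have hd : 0 ≤ δ * (X 1 - X 0) := mul_nonneg hδ0 (by linarith)
  have hd1 : δ * (X 1 - X 0) ≤ δ := by nlinarith
  have he : 0 ≤ δ * (X 2 - X 0 - δ * (X 1 - X 0)) := mul_nonneg hδ0 (by nlinarith)
  have he1 : δ * (X 2 - X 0 - δ * (X 1 - X 0)) ≤ δ := by nlinarith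
  refine ⟨?_, ?_, ?_, ?_, ?_, ?_, ?_, ?_⟩ <;> nlinarith [mul_nonneg hδ0 hd, mul_nonneg hδ0 he]

theorem spread_node (p : ℕ) : Spread (2⁻¹ ^ (p + 2)) (N (4 * p)) := by
  induction p with
  | zero => norm_num [Spread, node, initial, Matrix.cons_val_two, Matrix.tail_cons]
  | succ p ih => exact (node_block_step p ih).2.2

end CutBalanceCounterexample

/-- There exist nonnegative, piecewise-constant (constant on each
unit interval `[m, m+1)`), locally integrable weights on three agents that
satisfy the integral cut-balance reciprocity condition with `K = 1` on the
intervals `[4p, 4p+4]`, but for which some trajectory of the consensus system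
does not converge. -/
theorem exists_cut_balanced_nonconvergent_system :
    ∃ (a : Fin 3 → Fin 3 → ℝ → ℝ) (x : Fin 3 → ℝ → ℝ),
      (∀ i j t, 0 ≤ a i j t) ∧
      -- piecewise constant on unit intervals
      (∀ i j (m : ℕ) (s t : ℝ), s ∈ Set.Ico (m : ℝ) (m + 1) →
        t ∈ Set.Ico (m : ℝ) (m + 1) → a i j s = a i j t) ∧
      (∀ i j, Measurable (a i j)) ∧
      (∀ i j (t : ℝ), 0 ≤ t →
        IntervalIntegrable (a i j) MeasureTheory.volume 0 t) ∧
      -- integral cut-balance with K = 1 on the intervals [4p, 4p+4]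
      (∀ (p : ℕ) (S : Finset (Fin 3)), S.Nonempty → S ≠ Finset.univ →
        (∑ i ∈ S, ∑ j ∈ Sᶜ, ∫ t in (4*(p:ℝ))..(4*(p:ℝ)+4), a i j t)
          = ∑ i ∈ S, ∑ j ∈ Sᶜ, ∫ t in (4*(p:ℝ))..(4*(p:ℝ)+4), a j i t) ∧
      -- x is a trajectory of the consensus system
      (∀ i, Continuous (x i)) ∧
      (∀ i (t : ℝ), 0 ≤ t →
        x i t = x i 0 + ∫ s in (0:ℝ)..t, ∑ j, a i j s * (x j s - x i s)) ∧
      -- it does not converge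
      (∃ i, ¬ ∃ L : ℝ, Filter.Tendsto (x i) Filter.atTop (nhds L)) := by
  open EdgeSchedule CutBalanceCounterexample in
  refine ⟨weight schedule rate, fun i t => trajectory schedule rate initial t i,
    weight_nonneg _ _ rate_nonneg, ?_, measurable_weight _ _,
    fun i j t ht => intervalIntegrable_weight _ _ i j ht, ?_,
    fun i => (continuous_apply i).comp (continuous_trajectory _ _ _),
    fun i t ht => trajectory_eq_add_integral _ _ _ i ht, ⟨1, ?_⟩⟩
  · intro i j m s t hs ht
    simp only [weight, Nat.floor_eq_on_Ico m s hs, Nat.floor_eq_on_Ico m t ht]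
  · intro p S _ _
    have h := integral_weight schedule rate (m := 4 * p) (n := 4)
    push_cast at h
    simp only [h, unitWeight_block_symm p]
  · have h4 : ∀ c : ℕ, Tendsto (fun p : ℕ => ((4 * p + c : ℕ) : ℝ)) atTop atTop := fun c =>
      tendsto_natCast_atTop_atTop.comp (tendsto_atTop_mono (fun p => by dsimp; omega) tendsto_id)
    refine not_exists_tendsto_of_le_of_ge (h4 1) (h4 3) (by norm_num : (1 / 4 : ℝ) < 3 / 4)
      (fun p => ?_) (fun p => ?_) <;>
      simp only [trajectory_natCast, node_block_step p (spread_node p)]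
end

section
/- Let G be a finite directed graph on node set N such that for every nonempty proper subset S of N, if there is an edge from S to its complement then there is an edge from the complement to S (cut reciprocity). Then for any two nodes i, j, there is a directed path from i to j if and only if there is a directed path from j to i; hence the weakly connected components of G are strongly connected and pairwise not joined by any edge. -/
/-- In a finite directed graph satisfying cut reciprocity (for every
nonempty proper subset `S`, an edge out of `S` implies an edge into `S`),
reachability is symmetric: there is a directed path from `i` to `j` iff there is
one from `j` to `i`; moreover every edge lies within a strongly connected
component (no edge joins distinct components). -/
theorem cut_reciprocity_symmetric_reachability
    {N : Type*} [Fintype N] [DecidableEq N] (E : N → N → Prop)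
    (hcut : ∀ S : Finset N, S.Nonempty → S ≠ Finset.univ →
      (∃ i ∈ S, ∃ j ∈ Sᶜ, E i j) → (∃ i ∈ S, ∃ j ∈ Sᶜ, E j i)) :
    (∀ i j : N, Relation.ReflTransGen E i j ↔ Relation.ReflTransGen E j i) ∧
    (∀ i j : N, E i j → Relation.ReflTransGen E j i) := by
  classical
  have key : ∀ i j, E i j → Relation.ReflTransGen E j i := by
    intro i j hij
    by_contra h
    set S : Finset N := Finset.univ.filter (fun x => Relation.ReflTransGen E x i) with hS
    have hne : S.Nonempty := ⟨i, by simp [hS]; exact .refl⟩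
    have hjS : j ∉ S := by simp [hS]; exact h
    have hproper : S ≠ Finset.univ := fun he => hjS (he ▸ Finset.mem_univ j)
    obtain ⟨a, ha, b, hb, hba⟩ := hcut S hne hproper
      ⟨i, by simp [hS]; exact .refl, j, by simpa using hjS, hij⟩
    have hbS : Relation.ReflTransGen E b i :=
      Relation.ReflTransGen.head hba (by simpa [hS] using ha)
    simp only [Finset.mem_compl, hS, Finset.mem_filter, Finset.mem_univ, true_and] at hb
    exact hb hbS
  refine ⟨?_, key⟩
  have sym : ∀ i j, Relation.ReflTransGen E i j → Relation.ReflTransGen E j i := by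
    intro i j h
    induction h with
    | refl => exact .refl
    | tail _ e ih => exact (key _ _ e).trans ih
  exact fun i j => ⟨sym i j, sym j i⟩
end

section
/- Let S be a set of agents and suppose Σ_{i∈S, j∉S} ∫₀^∞ aᵢⱼ(t) dt < ∞. Let x̄_S(t) = max_{i∈S} xᵢ(t) for a bounded trajectory of the consensus system with |xⱼ(t) − xᵢ(t)| ≤ Δ(0) for all i, j, t. Then x̄_S(t) is a Cauchy function as t → ∞ (for all μ > 0 there is T with |x̄_S(v) − x̄_S(u)| ≤ μΔ(0) for all v > u ≥ T, using the increase bound x̄_S(v) − x̄_S(u) ≤ Δ(0)·Σ_{i∈S,j∉S}∫_u^v aᵢⱼ), hence lim_{t→∞} x̄_S(t) exists. -/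
/-!
Each opinion is absolutely continuous with a.e. derivative `∑ⱼ aᵢⱼ (xⱼ - xᵢ)` (or is frozen from
some time on), and the maximum of finitely many absolutely continuous functions is absolutely
continuous with, at a.e. time, the derivative of an agent attaining the maximum. For an agent that
is maximal in `S` the drift from inside `S` is `≤ 0` and the drift from outside is at most
`Δ₀ ∑_{j ∉ S} aᵢⱼ`, so `x̄_S(t) - Δ₀ ∫_T^t ∑_{i ∈ S, j ∉ S} aᵢⱼ` is nonincreasing. It is bounded
below because the smallest opinion of all agents is nondecreasing, hence it converges, and so does
`x̄_S`.
-/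

open intervalIntegral MeasureTheory Filter Set Topology

theorem Finset.abs_sup'_sub_sup'_le_sum {ι : Type*} {s : Finset ι} (hs : s.Nonempty)
    (f g : ι → ℝ) : |s.sup' hs f - s.sup' hs g| ≤ ∑ i ∈ s, |f i - g i| := by
  have hsup_le : ∀ f g : ι → ℝ, s.sup' hs f ≤ s.sup' hs g + ∑ i ∈ s, |f i - g i| := by
    intro f g
    refine Finset.sup'_le _ _ fun i hi => ?_
    have hfg : f i - g i ≤ ∑ j ∈ s, |f j - g j| :=
      (le_abs_self _).trans (Finset.single_le_sum (fun j _ => abs_nonneg (f j - g j)) hi)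
    linarith [Finset.le_sup' g hi]
  rw [abs_sub_le_iff]
  constructor
  · linarith [hsup_le f g]
  · simpa only [abs_sub_comm] using sub_le_iff_le_add'.2 (hsup_le g f)

theorem Finset.inf'_eq_neg_sup'_neg {ι : Type*} {s : Finset ι} (hs : s.Nonempty) (f : ι → ℝ) :
    s.inf' hs f = -s.sup' hs (-f ·) := by
  refine le_antisymm ?_ (Finset.le_inf' hs f fun i hi => neg_le.1 (Finset.le_sup' (-f ·) hi))
  obtain ⟨i, hi, h⟩ := s.exists_mem_eq_sup' hs (-f ·)
  rw [h, neg_neg]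
  exact Finset.inf'_le f hi

theorem Finset.sup'_le_inf'_add {ι : Type*} {s t : Finset ι} (hs : s.Nonempty) (ht : t.Nonempty)
    {f : ι → ℝ} {Δ : ℝ} (hf : ∀ i ∈ s, ∀ j ∈ t, f i ≤ f j + Δ) :
    s.sup' hs f ≤ t.inf' ht f + Δ :=
  Finset.sup'_le _ _ fun i hi =>
    sub_le_iff_le_add.1 (Finset.le_inf' _ _ fun j hj => sub_le_iff_le_add.2 (hf i hi j hj))

namespace AbsolutelyContinuousOnInterval

variable {a b : ℝ}

theorem congr {X : Type*} [PseudoMetricSpace X] {f g : ℝ → X}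
    (hf : AbsolutelyContinuousOnInterval f a b) (hfg : EqOn f g (uIcc a b)) :
    AbsolutelyContinuousOnInterval g a b := by
  refine Tendsto.congr' ?_ hf
  filter_upwards [mem_inf_of_right (mem_principal_self _)] with E hE
  refine Finset.sum_congr rfl fun i hi => ?_
  rw [hfg (hE.1 i hi).1, hfg (hE.1 i hi).2]

theorem _root_.absolutelyContinuousOnInterval_const {X : Type*} [PseudoMetricSpace X] (c : X) :
    AbsolutelyContinuousOnInterval (fun _ : ℝ => c) a b :=
  (LipschitzWith.const c).lipschitzOnWith.absolutelyContinuousOnInterval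

theorem finset_sup' {ι : Type*} {s : Finset ι} (hs : s.Nonempty) {f : ι → ℝ → ℝ}
    (hf : ∀ i ∈ s, AbsolutelyContinuousOnInterval (f i) a b) :
    AbsolutelyContinuousOnInterval (fun t => s.sup' hs (f · t)) a b := by
  refine squeeze_zero (fun E => Finset.sum_nonneg fun _ _ => dist_nonneg) (fun E => ?_)
    (by simpa using tendsto_finsetSum s hf)
  rw [Finset.sum_comm]
  gcongr with k
  simp only [Real.dist_eq]
  exact Finset.abs_sup'_sub_sup'_le_sum hs _ _

end AbsolutelyContinuousOnInterval

theorem Finset.sup'_sub_sup'_le_integral {ι : Type*} {s : Finset ι} (hs : s.Nonempty)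
    {h F : ι → ℝ → ℝ} {ψ : ℝ → ℝ} {u v : ℝ} (huv : u ≤ v)
    (hac : ∀ i ∈ s, AbsolutelyContinuousOnInterval (h i) u v)
    (hderiv : ∀ i ∈ s, ∀ᵐ t, t ∈ Set.Ioo u v → HasDerivAt (h i) (F i t) t)
    (hψ : IntervalIntegrable ψ volume u v)
    (hmax : ∀ t ∈ Set.Ioo u v, ∀ i ∈ s, (∀ j ∈ s, h j t ≤ h i t) → F i t ≤ ψ t) :
    s.sup' hs (h · v) - s.sup' hs (h · u) ≤ ∫ t in u..v, ψ t := by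
  set g : ℝ → ℝ := fun t => s.sup' hs (h · t)
  have hg : AbsolutelyContinuousOnInterval g u v := .finset_sup' hs hac
  rw [← hg.integral_deriv_eq_sub]
  refine integral_mono_ae_restrict huv hg.intervalIntegrable_deriv hψ ?_
  rw [EventuallyLE, ← Measure.restrict_congr_set Ioo_ae_eq_Icc,
    ae_restrict_iff' measurableSet_Ioo]
  filter_upwards [hg.ae_differentiableAt, (eventually_all_finset s).2 hderiv]
    with t hg_diff hh_deriv ht
  obtain ⟨i, hi, hgi⟩ := s.exists_mem_eq_sup' hs (h · t)
  -- `g - h i` is minimal at `t`, so `g` and `h i` have the same derivative there.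
  have hmin : IsLocalMin (g - h i) t := Eventually.of_forall fun y => by
    simp only [Pi.sub_apply, g, hgi, sub_self, sub_nonneg]
    exact Finset.le_sup' (h · y) hi
  have hgt : DifferentiableAt ℝ g t := hg_diff (Set.uIcc_of_le huv ▸ Set.Ioo_subset_Icc_self ht)
  have hderiv_eq := hmin.hasDerivAt_eq_zero (hgt.hasDerivAt.sub (hh_deriv i hi ht))
  refine (sub_eq_zero.1 hderiv_eq).trans_le (hmax t ht i hi fun j hj => ?_)
  exact hgi ▸ Finset.le_sup' (h · t) hj

theorem exists_absolutelyContinuous_hasDerivAt_of_eq_integral {y f : ℝ → ℝ}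
    (hy : ∀ t, 0 ≤ t → y t = y 0 + ∫ s in (0 : ℝ)..t, f s) :
    ∃ T, 0 ≤ T ∧ ∃ D : ℝ → ℝ, (D = f ∨ D = 0) ∧ ∀ u v, T ≤ u → u ≤ v →
      AbsolutelyContinuousOnInterval y u v ∧
        ∀ᵐ t, t ∈ Ioo u v → HasDerivAt y (D t) t := by
  by_cases hf : ∀ t, 0 ≤ t → IntervalIntegrable f volume 0 t
  · refine ⟨0, le_rfl, f, .inl rfl, fun u v hu huv => ?_⟩
    have hv : 0 ≤ v := hu.trans huv
    have hprim : EqOn (fun t => y 0 + ∫ s in (0 : ℝ)..t, f s) y (uIcc 0 v) := fun t ht =>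
      (hy t (uIcc_of_le hv ▸ ht).1).symm
    refine ⟨?_, ?_⟩
    · have hac := (absolutelyContinuousOnInterval_const (y 0)).fun_add
        ((hf v hv).absolutelyContinuousOnInterval_intervalIntegral left_mem_uIcc)
      exact (hac.congr hprim).mono (uIcc_subset_uIcc (uIcc_of_le hv ▸ ⟨hu, huv⟩) right_mem_uIcc)
    · filter_upwards [(hf v hv).ae_hasDerivAt_integral] with t ht htuv
      have htv : t ∈ uIcc 0 v := uIcc_of_le hv ▸ ⟨hu.trans htuv.1.le, htuv.2.le⟩
      refine ((ht htv 0 left_mem_uIcc).const_add (y 0)).congr_of_eventuallyEq ?_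
      exact (hprim.eventuallyEq_of_mem
        (uIcc_of_le hv ▸ Icc_mem_nhds (hu.trans_lt htuv.1) htuv.2)).symm
  · push Not at hf
    obtain ⟨t₀, ht₀, hf_t₀⟩ := hf
    -- From `t₀` on, the integral in `hy` takes its junk value `0`, which freezes `y`.
    have hconst : EqOn (fun _ => y 0) y (Ici t₀) := fun t ht => by
      have hnot : ¬IntervalIntegrable f volume 0 t := fun hint =>
        hf_t₀ (hint.mono_set (uIcc_subset_uIcc_left (uIcc_of_le (ht₀.trans ht) ▸ ⟨ht₀, ht⟩)))
      rw [hy t (ht₀.trans ht), integral_undef hnot, add_zero]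
    refine ⟨t₀, ht₀, 0, .inr rfl, fun u v hu huv => ⟨?_, ae_of_all _ fun t ht => ?_⟩⟩
    · refine (absolutelyContinuousOnInterval_const (y 0)).congr ?_
      exact hconst.mono fun t ht => (hu.trans (uIcc_of_le huv ▸ ht).1 : t₀ ≤ t)
    · exact (hasDerivAt_const t (y 0)).congr_of_eventuallyEq
        (hconst.eventuallyEq_of_mem (Ici_mem_nhds (hu.trans_lt ht.1))).symm

theorem exists_absolutelyContinuous_hasDerivAt_of_forall_eq_integral {ι : Type*} [Fintype ι]
    {y f : ι → ℝ → ℝ} (hy : ∀ i t, 0 ≤ t → y i t = y i 0 + ∫ s in (0 : ℝ)..t, f i s) :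
    ∃ T, 0 ≤ T ∧ ∃ D : ι → ℝ → ℝ, ∀ i, (D i = f i ∨ D i = 0) ∧ ∀ u v, T ≤ u → u ≤ v →
      AbsolutelyContinuousOnInterval (y i) u v ∧
        ∀ᵐ t, t ∈ Ioo u v → HasDerivAt (y i) (D i t) t := by
  choose T hT D hD hy_deriv using
    fun i => exists_absolutelyContinuous_hasDerivAt_of_eq_integral (hy i)
  have hT_le : ∀ i, T i ≤ ∑ j, T j := fun i =>
    Finset.single_le_sum (fun j _ => hT j) (Finset.mem_univ i)
  exact ⟨∑ j, T j, Finset.sum_nonneg fun j _ => hT j, D, fun i =>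
    ⟨hD i, fun u v hu huv => hy_deriv i u v ((hT_le i).trans hu) huv⟩⟩

theorem exists_tendsto_of_sub_le_integral {g A : ℝ → ℝ} {T b : ℝ}
    (hA : IntegrableOn A (Ioi T)) (hA_nonneg : ∀ t, T ≤ t → 0 ≤ A t)
    (hg : ∀ u v, T ≤ u → u ≤ v → g v - g u ≤ ∫ s in u..v, A s)
    (hb : ∀ t, T ≤ t → b ≤ g t) : ∃ L, Tendsto g atTop (𝓝 L) := by
  set P : ℝ → ℝ := fun t => ∫ s in T..t, A s
  have hA_int : ∀ u v, T ≤ u → T ≤ v → IntervalIntegrable A volume u v := fun u v hu hv =>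
    intervalIntegrable_iff.2 (hA.mono_set fun s hs => (le_min hu hv).trans_lt hs.1)
  have hP_sub : ∀ u v, T ≤ u → u ≤ v → P v - P u = ∫ s in u..v, A s := fun u v hu huv =>
    integral_interval_sub_left (hA_int T v le_rfl (hu.trans huv)) (hA_int T u le_rfl hu)
  have hP_mono : ∀ u v, T ≤ u → u ≤ v → P u ≤ P v := fun u v hu huv => by
    have : 0 ≤ ∫ s in u..v, A s := integral_nonneg huv fun s hs => hA_nonneg s (hu.trans hs.1)
    linarith [hP_sub u v hu huv]
  have hP_lim : Tendsto P atTop (𝓝 (∫ s in Ioi T, A s)) :=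
    intervalIntegral_tendsto_integral_Ioi T hA tendsto_id
  have hP_le : ∀ t, T ≤ t → P t ≤ ∫ s in Ioi T, A s := fun t ht =>
    ge_of_tendsto hP_lim ((eventually_ge_atTop t).mono fun s hs => hP_mono t s ht hs)
  -- `g - P` is antitone and bounded below beyond `T`.
  set G : ℝ → ℝ := fun t => g (max t T) - P (max t T)
  have hG_anti : Antitone G := fun s t hst => by
    have hst' : max s T ≤ max t T := max_le_max hst le_rfl
    have := hg _ _ (le_max_right s T) hst'
    have := hP_sub _ _ (le_max_right s T) hst'
    simp only [G]
    linarith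
  have hG_bdd : BddBelow (range G) := ⟨b - ∫ s in Ioi T, A s, by
    rintro _ ⟨t, rfl⟩
    have := hb _ (le_max_right t T)
    have := hP_le _ (le_max_right t T)
    simp only [G]
    linarith⟩
  refine ⟨(⨅ t, G t) + ∫ s in Ioi T, A s,
    ((tendsto_atTop_ciInf hG_anti hG_bdd).add hP_lim).congr' ?_⟩
  filter_upwards [eventually_ge_atTop T] with t ht
  simp only [G, max_eq_left ht, sub_add_cancel]

theorem exists_forall_abs_sub_le_of_tendsto {g : ℝ → ℝ} {L : ℝ} (hg : Tendsto g atTop (𝓝 L))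
    {ε : ℝ} (hε : 0 < ε) : ∃ T, 0 ≤ T ∧ ∀ u v, T ≤ u → T ≤ v → |g v - g u| ≤ ε := by
  obtain ⟨N, hN⟩ := Metric.cauchySeq_iff.1 hg.cauchySeq ε hε
  exact ⟨max N 0, le_max_right _ _, fun u v hu hv =>
    (hN v (le_of_max_le_left hv) u (le_of_max_le_left hu)).le⟩

theorem sum_mul_sub_le_mul_sum_compl {ι : Type*} [Fintype ι] [DecidableEq ι] (S : Finset ι)
    {a : ι → ι → ℝ} {x : ι → ℝ} {Δ : ℝ} (ha : ∀ i j, 0 ≤ a i j) (hΔ : 0 ≤ Δ)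
    (hspread : ∀ i j, |x j - x i| ≤ Δ) {i : ι} (hi : i ∈ S) (hmax : ∀ j ∈ S, x j ≤ x i) :
    ∑ j, a i j * (x j - x i) ≤ Δ * ∑ k ∈ S, ∑ j ∈ Sᶜ, a k j := by
  have hin : ∑ j ∈ S, a i j * (x j - x i) ≤ 0 :=
    Finset.sum_nonpos fun j hj => mul_nonpos_of_nonneg_of_nonpos (ha i j) (by linarith [hmax j hj])
  have hout : ∑ j ∈ Sᶜ, a i j * (x j - x i) ≤ Δ * ∑ j ∈ Sᶜ, a i j := by
    rw [Finset.mul_sum]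
    exact Finset.sum_le_sum fun j _ =>
      (mul_le_mul_of_nonneg_left ((le_abs_self _).trans (hspread i j)) (ha i j)).trans_eq
        (mul_comm _ _)
  have hrow : ∑ j ∈ Sᶜ, a i j ≤ ∑ k ∈ S, ∑ j ∈ Sᶜ, a k j :=
    Finset.single_le_sum (f := fun k => ∑ j ∈ Sᶜ, a k j)
      (fun k _ => Finset.sum_nonneg fun j _ => ha k j) hi
  rw [← Finset.sum_add_sum_compl S]
  linarith [mul_le_mul_of_nonneg_left hrow hΔ]

section Consensus

variable {ι : Type*} [Fintype ι] {x D : ι → ℝ → ℝ} {a : ι → ι → ℝ → ℝ} {u v : ℝ}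

theorem sup'_sub_sup'_le_integral_of_hasDerivAt_consensus [DecidableEq ι] {S : Finset ι}
    (hS : S.Nonempty) {Δ : ℝ} (hu : 0 ≤ u) (huv : u ≤ v) (ha_nonneg : ∀ i j t, 0 ≤ a i j t)
    (hΔ : 0 ≤ Δ) (hspread : ∀ i j t, 0 ≤ t → |x j t - x i t| ≤ Δ)
    (hD : ∀ i, (D i = fun s => ∑ j, a i j s * (x j s - x i s)) ∨ D i = 0)
    (hx : ∀ i, AbsolutelyContinuousOnInterval (x i) u v ∧
      ∀ᵐ t, t ∈ Ioo u v → HasDerivAt (x i) (D i t) t)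
    (hcross : IntervalIntegrable (fun t => Δ * ∑ i ∈ S, ∑ j ∈ Sᶜ, a i j t) volume u v) :
    S.sup' hS (x · v) - S.sup' hS (x · u) ≤ ∫ t in u..v, Δ * ∑ i ∈ S, ∑ j ∈ Sᶜ, a i j t :=
  Finset.sup'_sub_sup'_le_integral hS huv (fun i _ => (hx i).1) (fun i _ => (hx i).2) hcross
    fun t ht i hi hmax => by
      rcases hD i with h | h <;> rw [h]
      · exact sum_mul_sub_le_mul_sum_compl S (ha_nonneg · · t) hΔ
          (hspread · · t (hu.trans ht.1.le)) hi hmax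
      · exact mul_nonneg hΔ
          (Finset.sum_nonneg fun k _ => Finset.sum_nonneg fun j _ => ha_nonneg k j t)

theorem inf'_le_inf'_of_hasDerivAt_consensus (huniv : (Finset.univ : Finset ι).Nonempty)
    (huv : u ≤ v) (ha_nonneg : ∀ i j t, 0 ≤ a i j t)
    (hD : ∀ i, (D i = fun s => ∑ j, a i j s * (x j s - x i s)) ∨ D i = 0)
    (hx : ∀ i, AbsolutelyContinuousOnInterval (x i) u v ∧
      ∀ᵐ t, t ∈ Ioo u v → HasDerivAt (x i) (D i t) t) :
    Finset.univ.inf' huniv (x · u) ≤ Finset.univ.inf' huniv (x · v) := by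
  have := Finset.sup'_sub_sup'_le_integral huniv huv (h := fun i t => -x i t)
    (F := fun i t => -D i t) (ψ := 0) (fun i _ => (hx i).1.fun_neg)
    (fun i _ => (hx i).2.mono fun t ht ht' => (ht ht').neg) intervalIntegrable_const
    fun t _ i _ hmin => by
      rcases hD i with h | h <;> rw [h]
      · exact neg_nonpos.2 (Finset.sum_nonneg fun j _ => mul_nonneg (ha_nonneg i j t)
          (sub_nonneg.2 (neg_le_neg_iff.1 (hmin j (Finset.mem_univ j)))))
      · simp
  simp only [Pi.zero_apply, intervalIntegral.integral_zero] at this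
  rw [Finset.inf'_eq_neg_sup'_neg, Finset.inf'_eq_neg_sup'_neg]
  linarith

theorem exists_sup'_sub_sup'_le_integral_and_inf'_le_inf' [DecidableEq ι] {S : Finset ι}
    (hS : S.Nonempty) (huniv : (Finset.univ : Finset ι).Nonempty) {Δ : ℝ} (hΔ : 0 ≤ Δ)
    (ha_nonneg : ∀ i j t, 0 ≤ a i j t)
    (hsol : ∀ i t, 0 ≤ t → x i t = x i 0 + ∫ s in (0 : ℝ)..t, ∑ j, a i j s * (x j s - x i s))
    (hspread : ∀ i j t, 0 ≤ t → |x j t - x i t| ≤ Δ)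
    (hcross : IntegrableOn (fun t => Δ * ∑ i ∈ S, ∑ j ∈ Sᶜ, a i j t) (Ici 0)) :
    ∃ T, 0 ≤ T ∧ ∀ u v, T ≤ u → u ≤ v →
      S.sup' hS (x · v) - S.sup' hS (x · u) ≤ ∫ t in u..v, Δ * ∑ i ∈ S, ∑ j ∈ Sᶜ, a i j t ∧
      Finset.univ.inf' huniv (x · u) ≤ Finset.univ.inf' huniv (x · v) := by
  obtain ⟨T, hT, D, hD⟩ := exists_absolutelyContinuous_hasDerivAt_of_forall_eq_integral
    (f := fun i s => ∑ j, a i j s * (x j s - x i s)) hsol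
  refine ⟨T, hT, fun u v hu huv => ⟨?_, ?_⟩⟩
  · have hu₀ : 0 ≤ u := hT.trans hu
    exact sup'_sub_sup'_le_integral_of_hasDerivAt_consensus hS hu₀ huv ha_nonneg hΔ hspread
      (fun i => (hD i).1) (fun i => (hD i).2 u v hu huv)
      (intervalIntegrable_iff.2 (hcross.mono_set fun s hs =>
        (le_min hu₀ (hu₀.trans huv)).trans hs.1.le))
  · exact inf'_le_inf'_of_hasDerivAt_consensus huniv huv ha_nonneg
      (fun i => (hD i).1) (fun i => (hD i).2 u v hu huv)

end Consensus

theorem max_over_component_converges_general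
    (n : ℕ) (x : Fin n → ℝ → ℝ) (a : Fin n → Fin n → ℝ → ℝ)
    (S : Finset (Fin n)) (hS : S.Nonempty) (Δ₀ : ℝ) (hΔ₀ : 0 ≤ Δ₀)
    (ha_nonneg : ∀ i j t, 0 ≤ a i j t)
    (hsol : ∀ i t, 0 ≤ t →
      x i t = x i 0 + ∫ s in (0:ℝ)..t, ∑ j, a i j s * (x j s - x i s))
    (hspread : ∀ i j (t : ℝ), 0 ≤ t → |x j t - x i t| ≤ Δ₀)
    -- finiteness of the cross influence: Σ_{i∈S,j∉S} ∫₀^∞ a_ij < ∞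
    (hfin : IntegrableOn (fun t => ∑ i ∈ S, ∑ j ∈ Sᶜ, a i j t) (Set.Ici 0)) :
    (∀ μ : ℝ, 0 < μ → ∃ T : ℝ, 0 ≤ T ∧ ∀ u v : ℝ, T ≤ u → u ≤ v →
      |S.sup' hS (fun i => x i v) - S.sup' hS (fun i => x i u)| ≤ μ * Δ₀) ∧
    (∃ L : ℝ, Tendsto (fun t => S.sup' hS (fun i => x i t)) atTop (nhds L)) := by
  obtain ⟨i₀, hi₀⟩ := id hS
  have huniv : (Finset.univ : Finset (Fin n)).Nonempty := ⟨i₀, Finset.mem_univ _⟩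
  set g : ℝ → ℝ := fun t => S.sup' hS (x · t)
  set m : ℝ → ℝ := fun t => Finset.univ.inf' huniv (x · t)
  have hcross : IntegrableOn (fun t => Δ₀ * ∑ i ∈ S, ∑ j ∈ Sᶜ, a i j t) (Ici 0) :=
    hfin.const_mul Δ₀
  obtain ⟨T, hT, hgm⟩ := exists_sup'_sub_sup'_le_integral_and_inf'_le_inf' hS huniv hΔ₀ ha_nonneg
    hsol hspread hcross
  have hm_le_g : ∀ t, m t ≤ g t := fun t =>
    (Finset.inf'_le (x · t) (Finset.mem_univ i₀)).trans (Finset.le_sup' (x · t) hi₀)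
  have hg_le_m : ∀ t, 0 ≤ t → g t ≤ m t + Δ₀ := fun t ht =>
    Finset.sup'_le_inf'_add hS huniv fun i _ j _ => by
      linarith [le_abs_self (x i t - x j t), hspread j i t ht]
  obtain ⟨L, hL⟩ := exists_tendsto_of_sub_le_integral (hcross.mono_set (Ioi_subset_Ici hT))
    (fun t _ => mul_nonneg hΔ₀ (Finset.sum_nonneg fun k _ => Finset.sum_nonneg fun j _ =>
      ha_nonneg k j t)) (fun u v hu huv => (hgm u v hu huv).1)
    fun t ht => (hgm T t le_rfl ht).2.trans (hm_le_g t)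
  refine ⟨fun μ hμ => ?_, L, hL⟩
  rcases hΔ₀.eq_or_lt with rfl | hΔ₀_pos
  · -- All opinions agree, so `g = m` is both nonincreasing and nondecreasing.
    refine ⟨T, hT, fun u v hu huv => ?_⟩
    obtain ⟨hg_sub, hm_mono⟩ := hgm u v hu huv
    simp only [zero_mul, intervalIntegral.integral_zero] at hg_sub
    rw [mul_zero, abs_nonpos_iff, sub_eq_zero]
    linarith [hg_le_m u (hT.trans hu), hm_le_g v]
  · obtain ⟨T, hT, hTε⟩ := exists_forall_abs_sub_le_of_tendsto hL (mul_pos hμ hΔ₀_pos)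
    exact ⟨T, hT, fun u v hu huv => hTε u v hu (hu.trans huv)⟩

/-- If the total integral influence from outside `S` onto `S` is
finite and the trajectory is bounded with spread at most `Δ₀`, then
`x̄_S(t) = max_{i∈S} x_i(t)` is Cauchy as `t → ∞` (with explicit `μΔ₀` bound)
and hence converges. -/
theorem max_over_component_converges
    (n : ℕ) (x : Fin n → ℝ → ℝ) (a : Fin n → Fin n → ℝ → ℝ)
    (S : Finset (Fin n)) (hS : S.Nonempty) (Δ₀ : ℝ) (hΔ₀ : 0 ≤ Δ₀)
    (ha_nonneg : ∀ i j t, 0 ≤ a i j t)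
    (ha_meas : ∀ i j, Measurable (a i j))
    (hx_cont : ∀ i, Continuous (x i))
    (hsol : ∀ i t, 0 ≤ t →
      x i t = x i 0 + ∫ s in (0:ℝ)..t, ∑ j, a i j s * (x j s - x i s))
    (hspread : ∀ i j (t : ℝ), 0 ≤ t → |x j t - x i t| ≤ Δ₀)
    -- finiteness of the cross influence: Σ_{i∈S,j∉S} ∫₀^∞ a_ij < ∞
    (hfin : IntegrableOn (fun t => ∑ i ∈ S, ∑ j ∈ Sᶜ, a i j t) (Set.Ici 0)) :
    (∀ μ : ℝ, 0 < μ → ∃ T : ℝ, 0 ≤ T ∧ ∀ u v : ℝ, T ≤ u → u ≤ v →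
      |S.sup' hS (fun i => x i v) - S.sup' hS (fun i => x i u)| ≤ μ * Δ₀) ∧
    (∃ L : ℝ, Tendsto (fun t => S.sup' hS (fun i => x i t)) atTop (nhds L)) :=
  max_over_component_converges_general n x a S hS Δ₀ hΔ₀ ha_nonneg hsol hspread hfin
end

section
/- Suppose the pairwise reciprocity assumption holds with constants ε > 0 and T > 0 (every positive interaction aᵢⱼ(t) > 0 is contained in an interval of length ≤ T on which both ∫aᵢⱼ ≥ ε and ∫aⱼᵢ ≥ ε), and aᵢⱼ(t) ≤ M'' uniformly, and t_{k+1} − t_k ≤ M. If on [t_k, t_{k+1}] each pair {i,j} either has aᵢⱼ ≡ aⱼᵢ ≡ 0 or satisfies ∫_{t_k}^{t_{k+1}} aᵢⱼ ≥ ε and ∫_{t_k}^{t_{k+1}} aⱼᵢ ≥ ε, then the integral cut-balance condition Σ_{i∈S,j∉S} ∫_{t_k}^{t_{k+1}} aᵢⱼ ≤ K Σ_{i∈S,j∉S} ∫_{t_k}^{t_{k+1}} aⱼᵢ holds for every nonempty proper subset S, with K = M''M/ε. -/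
open intervalIntegral MeasureTheory

/-- Under pairwise reciprocity with constants `ε, T`, uniform bound
`a_ij ≤ M''`, interval length `t_{k+1} - t_k ≤ M`, and the dichotomy (each pair
is either fully silent on `[t_k, t_{k+1}]` or both integrals are at least `ε`),
the integral cut-balance condition holds with ratio `K = M''M/ε`. -/
theorem pairwise_dichotomy_implies_cut_balance
    (n : ℕ) (ε T M M'' tk tk1 : ℝ)
    (hε : 0 < ε) (hT : 0 < T) (hM : 0 < M) (hM'' : 0 < M'')
    (htk : tk ≤ tk1) (hlen : tk1 - tk ≤ M)
    (a : Fin n → Fin n → ℝ → ℝ)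
    (ha_nonneg : ∀ i j t, 0 ≤ a i j t)
    (ha_bdd : ∀ i j t, a i j t ≤ M'')
    (ha_int : ∀ i j, IntervalIntegrable (a i j) volume tk tk1)
    -- pairwise reciprocity assumption
    (hrecip : ∀ i j : Fin n, i ≠ j → ∀ t : ℝ, 0 ≤ t →
      (0 < a i j t ∨ 0 < a j i t) →
      ∃ u v : ℝ, u ≤ t ∧ t ≤ v ∧ v - u ≤ T ∧
        ε ≤ (∫ s in u..v, a i j s) ∧ ε ≤ (∫ s in u..v, a j i s))
    -- dichotomy on [tk, tk1]
    (hdich : ∀ i j : Fin n, i ≠ j →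
      (∀ t ∈ Set.Icc tk tk1, a i j t = 0 ∧ a j i t = 0) ∨
      (ε ≤ (∫ t in tk..tk1, a i j t) ∧ ε ≤ (∫ t in tk..tk1, a j i t))) :
    ∀ S : Finset (Fin n), S.Nonempty → S ≠ Finset.univ →
      (∑ i ∈ S, ∑ j ∈ Sᶜ, ∫ t in tk..tk1, a i j t)
        ≤ (M'' * M / ε) * ∑ i ∈ S, ∑ j ∈ Sᶜ, ∫ t in tk..tk1, a j i t := by
  intro S _ _
  rw [Finset.mul_sum]
  refine Finset.sum_le_sum fun i hi => ?_
  rw [Finset.mul_sum]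
  refine Finset.sum_le_sum fun j hj => ?_
  have hij : i ≠ j := by
    intro h; subst h; exact (Finset.mem_compl.mp hj) hi
  rcases hdich i j hij with hsil | ⟨h1, h2⟩
  · have e1 : (∫ t in tk..tk1, a i j t) = 0 := by
      rw [intervalIntegral.integral_congr (g := fun _ => (0:ℝ))]
      · simp
      · intro t ht
        rw [Set.uIcc_of_le htk] at ht
        exact (hsil t ht).1
    have e2 : (∫ t in tk..tk1, a j i t) = 0 := by
      rw [intervalIntegral.integral_congr (g := fun _ => (0:ℝ))]
      · simp
      · intro t ht
        rw [Set.uIcc_of_le htk] at ht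
        exact (hsil t ht).2
    rw [e1, e2, mul_zero]
  · have hub : (∫ t in tk..tk1, a i j t) ≤ M'' * M := by
      calc (∫ t in tk..tk1, a i j t) ≤ ∫ _ in tk..tk1, M'' := by
            apply intervalIntegral.integral_mono_on htk (ha_int i j)
              intervalIntegrable_const
            intro t _; exact ha_bdd i j t
        _ = M'' * (tk1 - tk) := by simp [mul_comm]
        _ ≤ M'' * M := by nlinarith
    calc (∫ t in tk..tk1, a i j t) ≤ M'' * M := hub
      _ = (M'' * M / ε) * ε := by field_simp
      _ ≤ (M'' * M / ε) * ∫ t in tk..tk1, a j i t := by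
          apply mul_le_mul_of_nonneg_left h2
          positivity
end

section
/- Let B(0), B(1), B(2), … be row-stochastic n×n matrices with B(p)ᵢᵢ ≥ β > 0 for all i, p and satisfying the cut-balance condition Σ_{i∈S,j∉S} B(p)ᵢⱼ ≤ K' Σ_{i∈S,j∉S} B(p)ⱼᵢ for all nonempty proper S. If y(p+1) = B(p) y(p) and y(p) converges to y*, and i, j are two agents with Σ_p B(p)ᵢⱼ = ∞ and Σ_p B(p)ⱼᵢ = ∞ implying y*ᵢ = y*ⱼ (per-component consensus on strongly connected persistent components), then in particular for n = 2: if Σ_p B(p)₁₂ = ∞ then y*₁ = y*₂. -/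
/-!
Write `a = B 0 1`, `b = B 1 0` and `d = y 1 - y 0`. One step moves agent 0 by `a d` and agent 1
by `-b d`, and multiplies the disagreement `d` by `1 - a - b`. The diagonal bound `a, b ≤ 1 - β`
gives `|1 - a - b| ≤ 1 - β (a + b)`, so `β (a + b) |d|` is bounded by the decrease of `|d|` and
telescopes: `∑ (a + b) |d| ≤ |d 0| / β`. Hence both trajectories have summable increments and
converge. If their limits differed, `|d|`, which decreases, would stay above `|L₁ - L₀| > 0`,
and then `∑ a` would be finite.
-/

open Filter Topology

section Contraction

variable {β : ℝ} {u d : ℕ → ℝ}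

theorem summable_mul_abs_of_abs_succ_le (hβ : 0 < β) (hu : ∀ p, 0 ≤ u p)
    (hd : ∀ p, |d (p + 1)| ≤ (1 - β * u p) * |d p|) : Summable fun p => u p * |d p| := by
  have htel : ∀ n, β * ∑ p ∈ Finset.range n, u p * |d p| ≤ |d 0| - |d n| := by
    intro n
    induction n with
    | zero => simp
    | succ n ih => rw [Finset.sum_range_succ, mul_add]; linarith [hd n]
  refine summable_of_sum_range_le (c := |d 0| / β)
    (fun p => mul_nonneg (hu p) (abs_nonneg _)) fun n => ?_
  rw [le_div_iff₀ hβ, mul_comm]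
  linarith [htel n, abs_nonneg (d n)]

theorem eq_zero_of_tendsto_of_abs_succ_le (hβ : 0 < β) (hu : ∀ p, 0 ≤ u p)
    (hd : ∀ p, |d (p + 1)| ≤ (1 - β * u p) * |d p|) {D : ℝ} (hlim : Tendsto d atTop (𝓝 D))
    (hu_not : ¬ Summable u) : D = 0 := by
  by_contra hD
  have hanti : Antitone fun p => |d p| := antitone_nat_of_succ_le fun p =>
    (hd p).trans (mul_le_of_le_one_left (abs_nonneg _)
      (by linarith [mul_nonneg hβ.le (hu p)]))
  have hle : ∀ p, |D| ≤ |d p| := hanti.le_of_tendsto hlim.abs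
  refine hu_not <| ((summable_mul_abs_of_abs_succ_le hβ hu hd).div_const |D|).of_nonneg_of_le
    hu fun p => ?_
  rw [le_div_iff₀ (abs_pos.2 hD)]
  exact mul_le_mul_of_nonneg_left (hle p) (hu p)

end Contraction

namespace Matrix

variable {β : ℝ} {B : Matrix (Fin 2) (Fin 2) ℝ}

theorem abs_one_sub_sub_le (hnonneg : ∀ i j, 0 ≤ B i j) (hstoch : ∀ i, ∑ j, B i j = 1)
    (hdiag : ∀ i, β ≤ B i i) : |1 - B 0 1 - B 1 0| ≤ 1 - β * (B 0 1 + B 1 0) := by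
  have h₀ := hstoch 0
  have h₁ := hstoch 1
  simp only [Fin.sum_univ_two] at h₀ h₁
  have ha := hnonneg 0 1
  have hb := hnonneg 1 0
  have ha₁ : 0 ≤ 1 - B 0 1 := by linarith [hnonneg 0 0]
  have hb₁ : 0 ≤ 1 - B 1 0 := by linarith [hnonneg 1 1]
  have hx : 0 ≤ 1 - B 0 1 - β := by linarith [hdiag 0]
  have hy : 0 ≤ 1 - B 1 0 - β := by linarith [hdiag 1]
  rw [abs_le]
  constructor
  · -- `2 - (1 + β)(a + b) = (1 - a - β) b + (1 - b - β) a + 2 (1 - a)(1 - b)`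
    linarith [mul_nonneg hx hb, mul_nonneg hy ha, mul_nonneg ha₁ hb₁]
  · have hβ₁ : 0 ≤ 1 - β := by linarith
    linarith [mul_nonneg hβ₁ (add_nonneg ha hb)]

theorem mulVec_sub_self_fin_two (hstoch : ∀ i, ∑ j, B i j = 1) (v : Fin 2 → ℝ) :
    (B *ᵥ v) 0 - v 0 = B 0 1 * (v 1 - v 0) ∧ (B *ᵥ v) 1 - v 1 = -(B 1 0 * (v 1 - v 0)) := by
  have h₀ := hstoch 0
  have h₁ := hstoch 1
  simp only [Fin.sum_univ_two] at h₀ h₁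
  simp only [mulVec, dotProduct, Fin.sum_univ_two]
  constructor
  · linear_combination v 0 * h₀
  · linear_combination v 1 * h₁

theorem abs_mulVec_sub_mulVec_le (hnonneg : ∀ i j, 0 ≤ B i j) (hstoch : ∀ i, ∑ j, B i j = 1)
    (hdiag : ∀ i, β ≤ B i i) (v : Fin 2 → ℝ) :
    |(B *ᵥ v) 1 - (B *ᵥ v) 0| ≤ (1 - β * (B 0 1 + B 1 0)) * |v 1 - v 0| := by
  obtain ⟨h₀, h₁⟩ := mulVec_sub_self_fin_two hstoch v
  have : (B *ᵥ v) 1 - (B *ᵥ v) 0 = (1 - B 0 1 - B 1 0) * (v 1 - v 0) := by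
    linear_combination h₁ - h₀
  rw [this, abs_mul]
  exact mul_le_mul_of_nonneg_right (abs_one_sub_sub_le hnonneg hstoch hdiag) (abs_nonneg _)

theorem dist_mulVec_le (hnonneg : ∀ i j, 0 ≤ B i j) (hstoch : ∀ i, ∑ j, B i j = 1)
    (v : Fin 2 → ℝ) : ∀ i, dist (v i) ((B *ᵥ v) i) ≤ (B 0 1 + B 1 0) * |v 1 - v 0| := by
  obtain ⟨h₀, h₁⟩ := mulVec_sub_self_fin_two hstoch v
  simp only [Fin.forall_fin_two, dist_comm (v _), Real.dist_eq, h₀, h₁, abs_neg, abs_mul,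
    abs_of_nonneg (hnonneg 0 1), abs_of_nonneg (hnonneg 1 0)]
  exact ⟨mul_le_mul_of_nonneg_right (le_add_of_nonneg_right (hnonneg 1 0)) (abs_nonneg _),
    mul_le_mul_of_nonneg_right (le_add_of_nonneg_left (hnonneg 0 1)) (abs_nonneg _)⟩

end Matrix

theorem two_agent_discrete_consensus_general
    (β : ℝ) (hβ : 0 < β)
    (B : ℕ → Matrix (Fin 2) (Fin 2) ℝ)
    (hB_nonneg : ∀ p i j, 0 ≤ B p i j)
    (hB_stoch : ∀ p i, ∑ j, B p i j = 1)
    (hB_diag : ∀ p i, β ≤ B p i i)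
    (y : ℕ → Fin 2 → ℝ)
    (hdyn : ∀ p, y (p + 1) = (B p).mulVec (y p)) :
    ∃ L₀ L₁ : ℝ,
      Tendsto (fun p => y p 0) atTop (nhds L₀) ∧
      Tendsto (fun p => y p 1) atTop (nhds L₁) ∧
      (¬ Summable (fun p => B p 0 1) → L₀ = L₁) := by
  set u : ℕ → ℝ := fun p => B p 0 1 + B p 1 0
  set d : ℕ → ℝ := fun p => y p 1 - y p 0
  have hu : ∀ p, 0 ≤ u p := fun p => add_nonneg (hB_nonneg p 0 1) (hB_nonneg p 1 0)
  have hd : ∀ p, |d (p + 1)| ≤ (1 - β * u p) * |d p| := fun p => by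
    simpa only [d, hdyn] using
      Matrix.abs_mulVec_sub_mulVec_le (hB_nonneg p) (hB_stoch p) (hB_diag p) (y p)
  have hconv : ∀ i, ∃ L, Tendsto (fun p => y p i) atTop (𝓝 L) := fun i =>
    cauchySeq_tendsto_of_complete <| cauchySeq_of_dist_le_of_summable _
      (fun p => by
        simpa only [hdyn] using Matrix.dist_mulVec_le (hB_nonneg p) (hB_stoch p) (y p) i)
      (summable_mul_abs_of_abs_succ_le hβ hu hd)
  obtain ⟨L₀, h₀⟩ := hconv 0
  obtain ⟨L₁, h₁⟩ := hconv 1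
  refine ⟨L₀, L₁, h₀, h₁, fun hns => ?_⟩
  have hu_not : ¬ Summable u := fun h =>
    hns <| h.of_nonneg_of_le (hB_nonneg · 0 1) fun p => le_add_of_nonneg_right (hB_nonneg p 1 0)
  linarith [eq_zero_of_tendsto_of_abs_succ_le hβ hu hd (h₁.sub h₀) hu_not]

/-- two-agent discrete case: for row-stochastic `2×2` matrices
with diagonal entries at least `β > 0` and cut balance with ratio `K'`, any
trajectory `y(p+1) = B(p) y(p)` has converging components, and if
`Σ_p B(p)₁₂ = ∞` the two limits coincide. -/
theorem two_agent_discrete_consensus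
    (β K' : ℝ) (hβ : 0 < β) (hK' : 1 ≤ K')
    (B : ℕ → Matrix (Fin 2) (Fin 2) ℝ)
    (hB_nonneg : ∀ p i j, 0 ≤ B p i j)
    (hB_stoch : ∀ p i, ∑ j, B p i j = 1)
    (hB_diag : ∀ p i, β ≤ B p i i)
    (hB_cut : ∀ p, B p 0 1 ≤ K' * B p 1 0 ∧ B p 1 0 ≤ K' * B p 0 1)
    (y : ℕ → Fin 2 → ℝ)
    (hdyn : ∀ p, y (p + 1) = (B p).mulVec (y p)) :
    ∃ L₀ L₁ : ℝ,
      Tendsto (fun p => y p 0) atTop (nhds L₀) ∧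
      Tendsto (fun p => y p 1) atTop (nhds L₁) ∧
      (¬ Summable (fun p => B p 0 1) → L₀ = L₁) :=
  two_agent_discrete_consensus_general β hβ B hB_nonneg hB_stoch hB_diag y hdyn
end
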